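/- arXiv:1907.05266 — 6 statements merged into one kernel-verified Lean document; each statement's English description precedes it below -/
import Mathlib

section
/- Let n ≡ 1 or 3 (mod 8) be an odd integer with n > 1. If S is a cardioidal starter for ℤ_n, then S is a Skolem starter. Moreover, S is a strong starter if and only if n ≢ 0 (mod 3). -/
/-!
A cardioidal pair `{c, 2c}` has differences `±c` and sum `3c`. The pair with difference `i`,
`1 ≤ i ≤ (n-1)/2`, is therefore `{i, 2i}` or `{-2i, -i}`, whose representatives in `1, …, n-1`
are `i < 2i` or `n - 2i < n - i`; this gives the Skolem property. The pair sums are the values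
of `c ↦ 3c` on the nonzero elements, so they are nonzero and distinct exactly when `3` is a unit
of `ℤ_n`. If `n = 3m`, the pair through `m` has `3c = 0`, because `m = c` or `m = 2c` and `2` is
a unit for odd `n`.
-/

/-- The sum of the two entries of an unordered pair. -/
def pairSum {n : ℕ} : Sym2 (ZMod n) → ZMod n :=
  Sym2.lift ⟨fun x y => x + y, fun x y => add_comm x y⟩

/-- `S` is a starter for `ℤ_n`: a set of unordered pairs of distinct nonzero
elements such that every nonzero element lies in exactly one pair, and for every
nonzero `a` there is exactly one pair whose (signed) difference is `a`. -/
def IsStarter (n : ℕ) (S : Set (Sym2 (ZMod n))) : Prop :=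
  (∀ z ∈ S, ¬ z.IsDiag) ∧
  (∀ z ∈ S, (0 : ZMod n) ∉ z) ∧
  (∀ a : ZMod n, a ≠ 0 → ∃! z, z ∈ S ∧ a ∈ z) ∧
  (∀ a : ZMod n, a ≠ 0 → ∃! z, z ∈ S ∧ ∃ x y : ZMod n, z = s(x, y) ∧ x - y = a)

/-- A starter is strong if the pair sums are nonzero and pairwise distinct. -/
def IsStrongStarter (n : ℕ) (S : Set (Sym2 (ZMod n))) : Prop :=
  IsStarter n S ∧ (∀ z ∈ S, pairSum z ≠ 0) ∧
    ∀ z ∈ S, ∀ w ∈ S, pairSum z = pairSum w → z = w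

/-- A starter is Skolem if, identifying `ℤ_n ∖ {0}` with `1, …, n-1` via `ZMod.val`,
for every `i = 1, …, (n-1)/2` some pair `{x, y}` with `y > x` satisfies `y - x ≡ i (mod n)`. -/
def IsSkolemStarter (n : ℕ) (S : Set (Sym2 (ZMod n))) : Prop :=
  IsStarter n S ∧ ∀ i : ℕ, 1 ≤ i → i ≤ (n - 1) / 2 →
    ∃ z ∈ S, ∃ x y : ZMod n, z = s(x, y) ∧ x.val < y.val ∧ y - x = (i : ZMod n)

/-- A strong Skolem starter is a starter that is both strong and Skolem. -/
def IsStrongSkolemStarter (n : ℕ) (S : Set (Sym2 (ZMod n))) : Prop :=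
  IsStrongStarter n S ∧ IsSkolemStarter n S

/-- A starter for `ℤ_n` is cardioidal if each of its pairs has the form `{x, 2x}`. -/
def IsCardioidal (n : ℕ) (S : Set (Sym2 (ZMod n))) : Prop :=
  IsStarter n S ∧ ∀ z ∈ S, ∃ x : ZMod n, z = s(x, 2 * x)

lemma pairSum_mk {n : ℕ} (a b : ZMod n) : pairSum s(a, b) = a + b := rfl

lemma pairSum_mk_two_mul {n : ℕ} (c : ZMod n) : pairSum s(c, 2 * c) = 3 * c := by
  rw [pairSum_mk]
  ring

lemma eq_neg_or_eq_of_mk_two_mul_eq {n : ℕ} {a c x y : ZMod n} (h : s(c, 2 * c) = s(x, y))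
    (hxy : x - y = a) : c = -a ∨ c = a := by
  rcases Sym2.eq_iff.mp h with ⟨rfl, rfl⟩ | ⟨rfl, rfl⟩
  · left
    linear_combination -hxy
  · right
    linear_combination hxy

lemma exists_val_lt_sub_eq_of_mk_two_mul {n i : ℕ} (hi : 0 < i) (h2i : 2 * i < n) {c : ZMod n}
    (hc : c = -i ∨ c = i) :
    ∃ x y : ZMod n, s(c, 2 * c) = s(x, y) ∧ x.val < y.val ∧ y - x = i := by
  have : NeZero n := ⟨by omega⟩
  have hi_val : (i : ZMod n).val = i := ZMod.val_natCast_of_lt (by omega)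
  have h2i_val : ((2 * i : ℕ) : ZMod n).val = 2 * i := ZMod.val_natCast_of_lt h2i
  rcases hc with rfl | rfl
  · refine ⟨2 * -(i : ZMod n), -(i : ZMod n), Sym2.eq_swap, ?_, by ring⟩
    have h2i_ne : ((2 * i : ℕ) : ZMod n) ≠ 0 := fun h => by
      rw [h, ZMod.val_zero] at h2i_val
      omega
    have hi_ne : (i : ZMod n) ≠ 0 := fun h => by
      rw [h, ZMod.val_zero] at hi_val
      omega
    rw [show 2 * -(i : ZMod n) = -((2 * i : ℕ) : ZMod n) by push_cast; ring,
      ZMod.neg_val, ZMod.neg_val, if_neg h2i_ne, if_neg hi_ne, h2i_val, hi_val]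
    omega
  · refine ⟨i, 2 * i, rfl, ?_, by ring⟩
    rw [show 2 * (i : ZMod n) = ((2 * i : ℕ) : ZMod n) by push_cast; rfl, h2i_val, hi_val]
    omega

namespace IsCardioidal

variable {n : ℕ} {S : Set (Sym2 (ZMod n))}

lemma ne_zero_of_mk_two_mul_mem (hS : IsCardioidal n S) {c : ZMod n} (hc : s(c, 2 * c) ∈ S) :
    c ≠ 0 := by
  rintro rfl
  exact hS.1.2.1 _ hc (Sym2.mem_mk_left 0 _)

theorem isSkolemStarter (hS : IsCardioidal n S) : IsSkolemStarter n S := by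
  refine ⟨hS.1, fun i hi hin => ?_⟩
  have h2i : 2 * i < n := by omega
  have hi_ne : (i : ZMod n) ≠ 0 := by
    rw [Ne, ZMod.natCast_eq_zero_iff]
    exact Nat.not_dvd_of_pos_of_lt hi (by omega)
  obtain ⟨z, ⟨hzS, x, y, rfl, hxy⟩, -⟩ := hS.1.2.2.2 i hi_ne
  obtain ⟨c, hc⟩ := hS.2 _ hzS
  rw [hc] at hzS
  exact ⟨_, hzS,
    exists_val_lt_sub_eq_of_mk_two_mul hi h2i (eq_neg_or_eq_of_mk_two_mul_eq hc.symm hxy)⟩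

theorem isStrongStarter_of_isUnit_three (hS : IsCardioidal n S) (h3 : IsUnit (3 : ZMod n)) :
    IsStrongStarter n S := by
  refine ⟨hS.1, fun z hz => ?_, fun z hz w hw hzw => ?_⟩
  · obtain ⟨c, rfl⟩ := hS.2 z hz
    rw [pairSum_mk_two_mul]
    exact mt h3.mul_right_eq_zero.mp (hS.ne_zero_of_mk_two_mul_mem hz)
  · obtain ⟨c, rfl⟩ := hS.2 z hz
    obtain ⟨d, rfl⟩ := hS.2 w hw
    rw [pairSum_mk_two_mul, pairSum_mk_two_mul] at hzw
    rw [h3.mul_left_cancel hzw]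

theorem not_isStrongStarter_of_three_dvd (hn : Odd n) (hS : IsCardioidal n S) (h3 : 3 ∣ n) :
    ¬ IsStrongStarter n S := by
  rintro ⟨-, hsum, -⟩
  obtain ⟨m, rfl⟩ := h3
  have hm_ne : (m : ZMod (3 * m)) ≠ 0 := by
    have : 0 < m := Nat.pos_of_ne_zero (by rintro rfl; exact Nat.not_odd_zero hn)
    rw [Ne, ZMod.natCast_eq_zero_iff]
    exact Nat.not_dvd_of_pos_of_lt this (by omega)
  have h3m : 3 * (m : ZMod (3 * m)) = 0 := by exact_mod_cast ZMod.natCast_self (3 * m)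
  have h2 : IsUnit (2 : ZMod (3 * m)) := by
    exact_mod_cast (ZMod.isUnit_iff_coprime 2 _).mpr (Nat.coprime_two_left.mpr hn)
  obtain ⟨z, ⟨hz, hmz⟩, -⟩ := hS.1.2.2.1 _ hm_ne
  obtain ⟨c, rfl⟩ := hS.2 z hz
  refine hsum _ hz ?_
  rw [pairSum_mk_two_mul]
  rcases Sym2.mem_iff.mp hmz with rfl | h2c
  · exact h3m
  · rw [h2c] at h3m
    exact h2.mul_right_eq_zero.mp (by linear_combination h3m)

theorem isStrongStarter_iff (hn : Odd n) (hS : IsCardioidal n S) :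
    IsStrongStarter n S ↔ ¬ 3 ∣ n :=
  ⟨fun h h3 => hS.not_isStrongStarter_of_three_dvd hn h3 h, fun h3 =>
    hS.isStrongStarter_of_isUnit_three <| by
      exact_mod_cast ZMod.isUnit_prime_of_not_dvd Nat.prime_three h3⟩

end IsCardioidal

theorem cardioidal_is_skolem_and_strong_iff_general (n : ℕ)
    (h8 : n % 8 = 1 ∨ n % 8 = 3) (S : Set (Sym2 (ZMod n)))
    (hS : IsCardioidal n S) :
    IsSkolemStarter n S ∧ (IsStrongStarter n S ↔ ¬ (3 ∣ n)) :=
  ⟨hS.isSkolemStarter, hS.isStrongStarter_iff (Nat.odd_iff.mpr (by omega))⟩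

/-- Lemma 1.2: for `n ≡ 1, 3 (mod 8)`, a cardioidal starter for `ℤ_n` is Skolem,
and it is strong if and only if `n ≢ 0 (mod 3)`. -/
theorem cardioidal_is_skolem_and_strong_iff (n : ℕ) (hn : 1 < n)
    (h8 : n % 8 = 1 ∨ n % 8 = 3) (S : Set (Sym2 (ZMod n)))
    (hS : IsCardioidal n S) :
    IsSkolemStarter n S ∧ (IsStrongStarter n S ↔ ¬ (3 ∣ n)) :=
  cardioidal_is_skolem_and_strong_iff_general n h8 S hS
end

section
/- Let p ≡ 3 (mod 4) be an odd prime with p ≠ 3. If β ∈ NQR(p)∖{−1}, then the set S_β = {{x, βx} : x ∈ QR(p)} is a strong starter for ℤ_p. -/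
lemma horton_aux_mul (p : ℕ) [Fact p.Prime] (a b : ZMod p) (ha : a ≠ 0) (hb : b ≠ 0) :
    IsSquare (a * b) ↔ (IsSquare a ↔ IsSquare b) := by
  have hab : a * b ≠ 0 := mul_ne_zero ha hb
  have hmul : quadraticChar (ZMod p) (a * b)
      = quadraticChar (ZMod p) a * quadraticChar (ZMod p) b := map_mul _ _ _
  by_cases h1 : IsSquare a <;> by_cases h2 : IsSquare b <;>
    simp only [iff_true, iff_false, true_iff, false_iff, h1, h2, not_not, not_true,
      not_false_iff] <;>
    rw [← quadraticChar_one_iff_isSquare hab] <;>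
    first
      | (rw [hmul, (quadraticChar_one_iff_isSquare ha).mpr h1,
            (quadraticChar_one_iff_isSquare hb).mpr h2]; norm_num)
      | (rw [hmul, (quadraticChar_one_iff_isSquare ha).mpr h1,
            quadraticChar_neg_one_iff_not_isSquare.mpr h2]; norm_num)
      | (rw [hmul, quadraticChar_neg_one_iff_not_isSquare.mpr h1,
            (quadraticChar_one_iff_isSquare hb).mpr h2]; norm_num)
      | (rw [hmul, quadraticChar_neg_one_iff_not_isSquare.mpr h1,
            quadraticChar_neg_one_iff_not_isSquare.mpr h2]; norm_num)

/-- Horton's lemma: for a prime `p ≡ 3 (mod 4)`, `p ≠ 3`, and a non-quadratic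
residue `β ≠ -1`, the set `S_β = {{x, βx} : x ∈ QR(p)}` is a strong starter for `ℤ_p`. -/
theorem horton_strong_starter (p : ℕ) (hp : p.Prime) (h4 : p % 4 = 3) (hp3 : p ≠ 3)
    (β : ZMod p) (hβ : ¬ IsSquare β) (hβ1 : β ≠ -1) :
    IsStrongStarter p {z | ∃ x : ZMod p, x ≠ 0 ∧ IsSquare x ∧ z = s(x, β * x)} := by
  haveI : Fact p.Prime := ⟨hp⟩
  set S : Set (Sym2 (ZMod p)) :=
    {z | ∃ x : ZMod p, x ≠ 0 ∧ IsSquare x ∧ z = s(x, β * x)} with hS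
  have hβ0 : β ≠ 0 := fun h => hβ (h ▸ IsSquare.zero)
  have hβ1' : β ≠ 1 := fun h => hβ (h ▸ IsSquare.one)
  have hm1 : ¬ IsSquare (-1 : ZMod p) := by
    rw [ZMod.exists_sq_eq_neg_one_iff]; simp [h4]
  have hneg : ∀ a : ZMod p, a ≠ 0 → (IsSquare (-a) ↔ ¬ IsSquare a) := by
    intro a ha
    have := horton_aux_mul p (-1) a (by simp) ha
    rw [neg_one_mul] at this
    rw [this]; tauto
  have hβx : ∀ x : ZMod p, x ≠ 0 → IsSquare x → ¬ IsSquare (β * x) := by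
    intro x hx hxs hs
    exact hβ (((horton_aux_mul p β x hβ0 hx).mp hs).mpr hxs)
  have hc : (1 : ZMod p) - β ≠ 0 := fun h => hβ1' (by linear_combination -h)
  have hd : (1 : ZMod p) + β ≠ 0 := fun h => hβ1 (by linear_combination h)
  refine ⟨⟨?_, ?_, ?_, ?_⟩, ?_, ?_⟩
  · -- not diagonal
    rintro z ⟨x, hx, hxs, rfl⟩
    rw [Sym2.isDiag_iff_proj_eq]
    intro h
    have h' : x = β * x := h
    exact hβx x hx hxs (by rw [← h']; exact hxs)
  · -- 0 not in pair
    rintro z ⟨x, hx, hxs, rfl⟩ h0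
    rw [Sym2.mem_iff] at h0
    rcases h0 with h | h
    · exact hx h.symm
    · exact mul_ne_zero hβ0 hx h.symm
  · -- unique pair containing a
    intro a ha
    by_cases has : IsSquare a
    · refine ⟨s(a, β * a), ⟨⟨a, ha, has, rfl⟩, by simp⟩, ?_⟩
      rintro z ⟨⟨x, hx, hxs, rfl⟩, hmem⟩
      rw [Sym2.mem_iff] at hmem
      rcases hmem with h | h
      · rw [h]
      · exact absurd (h ▸ has) (hβx x hx hxs)
    · have hx0 : β⁻¹ * a ≠ 0 := mul_ne_zero (inv_ne_zero hβ0) ha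
      have hxs : IsSquare (β⁻¹ * a) := by
        have := horton_aux_mul p β (β⁻¹ * a) hβ0 hx0
        rw [← mul_assoc, mul_inv_cancel₀ hβ0, one_mul] at this
        tauto
      have hba : β * (β⁻¹ * a) = a := by
        rw [← mul_assoc, mul_inv_cancel₀ hβ0, one_mul]
      refine ⟨s(β⁻¹ * a, β * (β⁻¹ * a)), ⟨⟨β⁻¹ * a, hx0, hxs, rfl⟩, by
        rw [hba, Sym2.mem_iff]; right; rfl⟩, ?_⟩
      rintro z ⟨⟨x, hx, hxs', rfl⟩, hmem⟩
      rw [Sym2.mem_iff] at hmem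
      rcases hmem with h | h
      · exact absurd (h ▸ hxs') has
      · have : x = β⁻¹ * a := by rw [h, ← mul_assoc, inv_mul_cancel₀ hβ0, one_mul]
        rw [this]
  · -- unique pair with difference a
    intro a ha
    set d : ZMod p := (1 - β)⁻¹ * a with hdd
    have hd0 : d ≠ 0 := mul_ne_zero (inv_ne_zero hc) ha
    have hcd : (1 - β) * d = a := by
      rw [hdd, ← mul_assoc, mul_inv_cancel₀ hc, one_mul]
    by_cases hds : IsSquare d
    · refine ⟨s(d, β * d), ⟨⟨d, hd0, hds, rfl⟩, d, β * d, rfl, by linear_combination hcd⟩, ?_⟩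
      rintro z ⟨⟨u, hu, hus, rfl⟩, x, y, hxy, hsub⟩
      rw [Sym2.eq_iff] at hxy
      rcases hxy with ⟨rfl, rfl⟩ | ⟨rfl, rfl⟩
      · have h1 : (1 - β) * u = a := by linear_combination hsub
        have : u = d := by
          apply mul_left_cancel₀ hc; rw [h1, hcd]
        rw [this]
      · exfalso
        have h1 : (1 - β) * u = -a := by linear_combination -hsub
        have : u = -d := by
          have h2 : (1 - β) * u = (1 - β) * (-d) := by rw [h1, mul_neg, hcd]
          exact mul_left_cancel₀ hc h2
        rw [this] at hus
        exact ((hneg d hd0).mp hus) hds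
    · have hnds : IsSquare (-d) := (hneg d hd0).mpr hds
      have hnd0 : -d ≠ 0 := neg_ne_zero.mpr hd0
      refine ⟨s(-d, β * -d), ⟨⟨-d, hnd0, hnds, rfl⟩,
        β * -d, -d, Sym2.eq_swap.symm, by linear_combination hcd⟩, ?_⟩
      rintro z ⟨⟨u, hu, hus, rfl⟩, x, y, hxy, hsub⟩
      rw [Sym2.eq_iff] at hxy
      rcases hxy with ⟨rfl, rfl⟩ | ⟨rfl, rfl⟩
      · exfalso
        have h1 : (1 - β) * u = a := by linear_combination hsub
        have : u = d := by
          apply mul_left_cancel₀ hc; rw [h1, hcd]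
        exact hds (this ▸ hus)
      · have : u = -d := by
          apply mul_left_cancel₀ hc
          rw [mul_neg, hcd]; linear_combination -hsub
        rw [this]
  · -- sums nonzero
    rintro z ⟨x, hx, hxs, rfl⟩
    show x + β * x ≠ 0
    intro h
    exact mul_ne_zero hd hx (by linear_combination h)
  · -- sums distinct
    rintro z ⟨x, hx, hxs, rfl⟩ w ⟨y, hy, hys, rfl⟩ hsum
    have h : x + β * x = y + β * y := hsum
    have h2 : (1 + β) * x = (1 + β) * y := by linear_combination h
    have hxy : x = y := mul_left_cancel₀ hd h2
    rw [hxy]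
end

section
/- Let p ≡ 3 (mod 8) be an odd prime with p ≠ 3, let n ≥ 1 be an integer, and let r be a primitive root modulo p such that r^{p−1} ≢ 1 (mod p²) (so r is a primitive root modulo p^m for every m ≥ 1). For i = 0,…,n−1 let p^i·S_{p^{n−i}} = {{p^i·x mod p^n, 2·p^i·x mod p^n} : x ∈ ⟨r²⟩_{p^{n−i}}}, where each element of ⟨r²⟩_{p^{n−i}} is represented by its least positive residue. Then S = ⋃_{i=0}^{n−1} p^i·S_{p^{n−i}} is a strong Skolem starter for ℤ_{p^n}. -/
lemma aux_unit {p : ℕ} (hp : p.Prime) {r : ℤ} (hrp : ¬ (p:ℤ) ∣ r) (m : ℕ) :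
    IsUnit (r : ZMod (p^m)) := by
  have hc : IsCoprime (r : ℤ) ((p:ℤ)^m) :=
    (((Nat.prime_iff_prime_int.mp hp).coprime_iff_not_dvd.mpr hrp).symm).pow_right
  have h2 := hc.map (Int.castRingHom (ZMod (p^m)))
  simp only [Int.coe_castRingHom, Int.cast_pow, Int.cast_natCast] at h2
  rw [show ((p:ℕ) : ZMod (p^m))^m = 0 by rw [← Nat.cast_pow, ZMod.natCast_self],
    isCoprime_zero_right] at h2
  exact h2

lemma aux_lte {p : ℕ} (hp : p.Prime) (hodd : Odd p) {r : ℤ}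
    (h1 : (p:ℤ) ∣ r^(p-1) - 1) (h2 : ¬ (p:ℤ)^2 ∣ r^(p-1) - 1) {k m : ℕ} (hkm : k + 1 < m) :
    ¬ (p:ℤ)^m ∣ r^(p^k * (p-1)) - 1 := by
  have hx : ¬ (p:ℤ) ∣ r^(p-1) := by
    intro h
    have hd : (p:ℤ) ∣ 1 := by simpa using h.sub h1
    have := Int.le_of_dvd one_pos hd
    have := hp.two_le
    omega
  have key := Int.emultiplicity_pow_sub_pow hp hodd (x := r^(p-1)) (y := 1) (by simpa using h1) hx (p^k)
  rw [← pow_mul, one_pow, mul_comm (p-1)] at key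
  have e1 : emultiplicity ((p:ℤ)) (r^(p-1) - 1) = (1 : ℕ) := by
    rw [emultiplicity_eq_coe]
    simpa using ⟨h1, h2⟩
  have e2 : emultiplicity p (p^k) = (k : ℕ) := emultiplicity_pow_self_of_prime hp.prime k
  rw [e1, e2] at key
  intro hdvd
  have hle := le_emultiplicity_of_pow_dvd hdvd
  rw [key, ← Nat.cast_add] at hle
  exact absurd (Nat.cast_le.mp hle) (by omega)

lemma aux_hrp {p : ℕ} (hp : p.Prime) {r : ℤ} (hr : IsPrimitiveRoot (r : ZMod p) (p - 1)) :
    ¬ (p:ℤ) ∣ r := by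
  intro h
  have h0 : (r : ZMod p) = 0 := (ZMod.intCast_zmod_eq_zero_iff_dvd r p).mpr h
  have h1 := hr.pow_eq_one
  rw [h0, zero_pow (by have := hp.two_le; omega)] at h1
  haveI : Fact p.Prime := ⟨hp⟩
  exact zero_ne_one h1

lemma aux_h1 {p : ℕ} (hp : p.Prime) {r : ℤ} (hr : IsPrimitiveRoot (r : ZMod p) (p - 1)) :
    (p:ℤ) ∣ r^(p-1) - 1 := by
  have h1 := hr.pow_eq_one
  have : ((r^(p-1) - 1 : ℤ) : ZMod p) = 0 := by push_cast [h1]; ring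
  exact_mod_cast (ZMod.intCast_zmod_eq_zero_iff_dvd _ p).mp this

lemma aux_orderOf {p : ℕ} (hp : p.Prime) (hodd : Odd p) {r : ℤ}
    (hr : IsPrimitiveRoot (r : ZMod p) (p - 1)) (h2 : ¬ (p:ℤ)^2 ∣ r^(p-1) - 1)
    {m : ℕ} (hm : 1 ≤ m) :
    orderOf (r : ZMod (p^m)) = p^(m-1) * (p-1) := by
  have hrp := aux_hrp hp hr
  have h1 := aux_h1 hp hr
  have hu := aux_unit hp hrp m
  haveI : NeZero (p^m) := ⟨pow_ne_zero m hp.ne_zero⟩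
  set u := hu.unit with hudef
  have hcoe : (u : ZMod (p^m)) = (r : ZMod (p^m)) := hu.unit_spec
  have hord : orderOf (r : ZMod (p^m)) = orderOf u := by rw [← hcoe, orderOf_units]
  set d := orderOf u with hd
  have hcard : Fintype.card (ZMod (p^m))ˣ = p^(m-1) * (p-1) := by
    rw [ZMod.card_units_eq_totient, Nat.totient_prime_pow hp (by omega)]
  have hdvd : d ∣ p^(m-1) * (p-1) := hcard ▸ orderOf_dvd_card
  have hd0 : d ≠ 0 := (orderOf_pos u).ne'
  -- (p-1) ∣ d
  have hp1d : (p - 1) ∣ d := by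
    have hmne : p ∣ p^m := dvd_pow_self p (by omega)
    have hπ := orderOf_map_dvd (Units.map (ZMod.castHom hmne (ZMod p)).toMonoidHom) u
    have hcoe2 : ((Units.map (ZMod.castHom hmne (ZMod p)).toMonoidHom u : (ZMod p)ˣ) : ZMod p)
        = (r : ZMod p) := by
      rw [Units.coe_map, hcoe]
      simpa using map_intCast (ZMod.castHom hmne (ZMod p)) r
    rw [← orderOf_units, hcoe2, ← hr.eq_orderOf] at hπ
    exact hπ
  -- p ∤ (p - 1)
  have hpp1 : ¬ p ∣ (p - 1) := by
    intro h
    have := Nat.le_of_dvd (by have := hp.two_le; omega) h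
    have := hp.two_le
    omega
  have hcop : Nat.Coprime (p^(m-1)) (p-1) :=
    Nat.Coprime.pow_left _ (hp.coprime_iff_not_dvd.mpr hpp1)
  -- p^(m-1) ∣ d
  have hpm1d : p^(m-1) ∣ d := by
    set e := d.factorization p with he
    have hproj : p ^ e * (d / p ^ e) = d := Nat.ordProj_mul_ordCompl_eq_self d p
    have hwnd : ¬ p ∣ (d / p ^ e) := Nat.not_dvd_ordCompl hp hd0
    have hwdvd : (d / p ^ e) ∣ p^(m-1) * (p-1) := dvd_trans (Nat.ordCompl_dvd d p) hdvd
    have hw1 : (d / p ^ e) ∣ (p - 1) :=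
      (Nat.Coprime.pow_right _ ((hp.coprime_iff_not_dvd.mpr hwnd).symm)).dvd_of_dvd_mul_left hwdvd
    have hpe : p ^ e ∣ p ^ (m-1) := by
      have h1' : p ^ e ∣ p^(m-1) * (p-1) := dvd_trans (Nat.ordProj_dvd d p) hdvd
      exact (Nat.Coprime.pow_left _ (hp.coprime_iff_not_dvd.mpr hpp1)).dvd_of_dvd_mul_right h1'
    have hele : e ≤ m - 1 := (Nat.pow_dvd_pow_iff_le_right hp.one_lt).mp hpe
    have hem : e = m - 1 := by
      by_contra hne
      have hem2 : e ≤ m - 2 ∧ 2 ≤ m := by omega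
      have hddvd : d ∣ p^(m-2) * (p-1) := by
        calc d = p ^ e * (d / p ^ e) := hproj.symm
        _ ∣ p^(m-2) * (p-1) := mul_dvd_mul (pow_dvd_pow p hem2.1) hw1
      have hpow1 : (r : ZMod (p^m)) ^ (p^(m-2) * (p-1)) = 1 := by
        exact orderOf_dvd_iff_pow_eq_one.mp (by rw [hord]; exact hddvd)
      have hz : ((r ^ (p^(m-2) * (p-1)) - 1 : ℤ) : ZMod (p^m)) = 0 := by
        push_cast [hpow1]; ring
      have hdl := (ZMod.intCast_zmod_eq_zero_iff_dvd _ (p^m)).mp hz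
      rw [Nat.cast_pow] at hdl
      exact aux_lte hp hodd h1 h2 (by omega : (m-2) + 1 < m) hdl
    rw [← hproj, hem]
    exact Dvd.intro _ rfl
  have := Nat.Coprime.mul_dvd_of_dvd_of_dvd hcop hpm1d hp1d
  rw [hord]
  exact Nat.dvd_antisymm hdvd this

lemma aux_surj {p : ℕ} (hp : p.Prime) (hodd : Odd p) {r : ℤ}
    (hr : IsPrimitiveRoot (r : ZMod p) (p - 1)) (h2 : ¬ (p:ℤ)^2 ∣ r^(p-1) - 1)
    {m : ℕ} (hm : 1 ≤ m) {a : ZMod (p^m)} (ha : IsUnit a) :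
    ∃ k : ℕ, a = (r : ZMod (p^m))^k := by
  have hrp := aux_hrp hp hr
  have hu := aux_unit hp hrp m
  haveI : NeZero (p^m) := ⟨pow_ne_zero m hp.ne_zero⟩
  set u := hu.unit with hudef
  have hcoe : (u : ZMod (p^m)) = (r : ZMod (p^m)) := hu.unit_spec
  have hordu : orderOf u = p^(m-1) * (p-1) := by
    rw [← orderOf_units, hcoe]
    exact aux_orderOf hp hodd hr h2 hm
  have hcard : Nat.card (ZMod (p^m))ˣ = p^(m-1) * (p-1) := by
    rw [Nat.card_eq_fintype_card, ZMod.card_units_eq_totient, Nat.totient_prime_pow hp (by omega)]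
  have htop : Subgroup.zpowers u = ⊤ := by
    apply Subgroup.eq_top_of_card_eq
    rw [Nat.card_zpowers, hordu, hcard]
  have hmem : ha.unit ∈ Subgroup.zpowers u := htop ▸ Subgroup.mem_top _
  rw [← mem_powers_iff_mem_zpowers, Submonoid.mem_powers_iff] at hmem
  obtain ⟨k, hk⟩ := hmem
  refine ⟨k, ?_⟩
  have := congrArg (Units.val) hk
  rw [Units.val_pow_eq_pow_val, hcoe, ha.unit_spec] at this
  exact this.symm

lemma aux_parity {p : ℕ} (hp : p.Prime) (hodd : Odd p) {r : ℤ}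
    (hr : IsPrimitiveRoot (r : ZMod p) (p - 1)) (h2 : ¬ (p:ℤ)^2 ∣ r^(p-1) - 1)
    {m : ℕ} (hm : 1 ≤ m) {k l : ℕ} (hkl : (r : ZMod (p^m))^k = (r : ZMod (p^m))^l) :
    (Even k ↔ Even l) := by
  have hrp := aux_hrp hp hr
  have hu := aux_unit hp hrp m
  haveI : NeZero (p^m) := ⟨pow_ne_zero m hp.ne_zero⟩
  set u := hu.unit with hudef
  have hcoe : (u : ZMod (p^m)) = (r : ZMod (p^m)) := hu.unit_spec
  have hkl' : u ^ k = u ^ l := by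
    apply Units.ext
    rw [Units.val_pow_eq_pow_val, Units.val_pow_eq_pow_val, hcoe]
    exact hkl
  have hordu : orderOf u = p^(m-1) * (p-1) := by
    rw [← orderOf_units, hcoe]
    exact aux_orderOf hp hodd hr h2 hm
  rw [pow_eq_pow_iff_modEq, hordu] at hkl'
  have h2d : 2 ∣ p^(m-1) * (p-1) := by
    have h21 : 2 ∣ (p - 1) := by
      obtain ⟨t, ht⟩ := hodd
      have := hp.two_le
      omega
    exact Dvd.dvd.mul_left h21 _
  have hmod2 := (Nat.ModEq.of_dvd h2d hkl')
  unfold Nat.ModEq at hmod2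
  rw [Nat.even_iff, Nat.even_iff]
  omega

lemma aux_pow_ord {p : ℕ} (hp : p.Prime) (hodd : Odd p) {r : ℤ}
    (hr : IsPrimitiveRoot (r : ZMod p) (p - 1)) (h2 : ¬ (p:ℤ)^2 ∣ r^(p-1) - 1)
    {m : ℕ} (hm : 1 ≤ m) :
    (r : ZMod (p^m))^(p^(m-1) * (p-1)) = 1 := by
  rw [← aux_orderOf hp hodd hr h2 hm]
  exact pow_orderOf_eq_one _

def inT (r : ℤ) (M : ℕ) (x : ZMod M) : Prop := ∃ j : ℕ, x = ((r : ZMod M) ^ 2) ^ j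

lemma inT_iff_even {r : ℤ} {M : ℕ} {x : ZMod M} :
    inT r M x ↔ ∃ k : ℕ, Even k ∧ x = (r : ZMod M)^k := by
  constructor
  · rintro ⟨j, rfl⟩
    exact ⟨2*j, ⟨j, by ring⟩, by rw [pow_mul]⟩
  · rintro ⟨k, ⟨t, rfl⟩, rfl⟩
    exact ⟨t, by rw [← pow_mul]; ring_nf⟩

lemma aux_inv {p : ℕ} (hp : p.Prime) (hodd : Odd p) {r : ℤ}
    (hr : IsPrimitiveRoot (r : ZMod p) (p - 1)) (h2 : ¬ (p:ℤ)^2 ∣ r^(p-1) - 1)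
    {m : ℕ} (hm : 1 ≤ m) (c : ℕ) :
    (r : ZMod (p^m))^c * (r : ZMod (p^m))^(c * (p^(m-1)*(p-1) - 1)) = 1 := by
  have hD : 1 ≤ p^(m-1)*(p-1) := by
    have := hp.two_le
    have h1 : 0 < p^(m-1) := Nat.pow_pos (by omega)
    have h2' : 0 < p - 1 := by omega
    exact Nat.one_le_iff_ne_zero.mpr (Nat.mul_ne_zero (by omega) (by omega))
  have hms : c * (p^(m-1)*(p-1) - 1) = c * (p^(m-1)*(p-1)) - c := by
    rw [Nat.mul_sub, mul_one]
  have hle : c ≤ c * (p^(m-1)*(p-1)) := Nat.le_mul_of_pos_right c hD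
  have hexp : c + c * (p^(m-1)*(p-1) - 1) = (p^(m-1)*(p-1)) * c := by
    rw [hms]
    have := Nat.mul_comm c (p^(m-1)*(p-1))
    omega
  rw [← pow_add, hexp, pow_mul, aux_pow_ord hp hodd hr h2 hm, one_pow]

lemma aux_two_odd {p : ℕ} (hp : p.Prime) (h8 : p % 8 = 3) {r : ℤ}
    {m : ℕ} (hm : 1 ≤ m) {k : ℕ} (h : (2 : ZMod (p^m)) = (r : ZMod (p^m))^k) :
    ¬ Even k := by
  rintro ⟨t, rfl⟩
  haveI : Fact p.Prime := ⟨hp⟩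
  have hπ := congrArg (ZMod.castHom (dvd_pow_self p (by omega : m ≠ 0)) (ZMod p)) h
  rw [map_pow, map_intCast, map_ofNat] at hπ
  have hsq : IsSquare (2 : ZMod p) := ⟨(r : ZMod p)^t, by rw [hπ, ← pow_add]⟩
  rw [ZMod.exists_sq_eq_two_iff (by omega)] at hsq
  omega

lemma aux_negone_odd {p : ℕ} (hp : p.Prime) (h8 : p % 8 = 3) {r : ℤ}
    {m : ℕ} (hm : 1 ≤ m) {k : ℕ} (h : (-1 : ZMod (p^m)) = (r : ZMod (p^m))^k) :
    ¬ Even k := by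
  rintro ⟨t, rfl⟩
  haveI : Fact p.Prime := ⟨hp⟩
  have hπ := congrArg (ZMod.castHom (dvd_pow_self p (by omega : m ≠ 0)) (ZMod p)) h
  rw [map_pow, map_intCast, map_neg, map_one] at hπ
  have hsq : IsSquare (-1 : ZMod p) := ⟨(r : ZMod p)^t, by rw [hπ, ← pow_add]⟩
  rw [ZMod.exists_sq_eq_neg_one_iff] at hsq
  omega

lemma aux_unit_nat {p : ℕ} (hp : p.Prime) {c : ℕ} (hc : ¬ p ∣ c) (m : ℕ) [NeZero (p^m)] :
    IsUnit ((c:ℕ) : ZMod (p^m)) := by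
  rw [ZMod.isUnit_iff_coprime]
  exact Nat.Coprime.pow_right _ ((hp.coprime_iff_not_dvd.mpr hc).symm)

lemma aux_unit_two {p : ℕ} (hp : p.Prime) (hodd : Odd p) (m : ℕ) :
    IsUnit (2 : ZMod (p^m)) := by
  haveI : NeZero (p^m) := ⟨pow_ne_zero m hp.ne_zero⟩
  have h2 : ¬ p ∣ 2 := by
    intro h
    have := (Nat.prime_dvd_prime_iff_eq hp Nat.prime_two).mp h
    obtain ⟨t, ht⟩ := hodd
    omega
  have := aux_unit_nat hp (c := 2) h2 m
  simpa using this

lemma aux_unit_three {p : ℕ} (hp : p.Prime) (hp3 : p ≠ 3) (m : ℕ) :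
    IsUnit (3 : ZMod (p^m)) := by
  haveI : NeZero (p^m) := ⟨pow_ne_zero m hp.ne_zero⟩
  have h3 : ¬ p ∣ 3 := by
    intro h
    exact hp3 ((Nat.prime_dvd_prime_iff_eq hp Nat.prime_three).mp h)
  have := aux_unit_nat hp (c := 3) h3 m
  simpa using this

lemma inT_unit {p : ℕ} (hp : p.Prime) {r : ℤ} (hrp : ¬ (p:ℤ) ∣ r) {m : ℕ}
    {x : ZMod (p^m)} (hx : inT r (p^m) x) : IsUnit x := by
  obtain ⟨j, rfl⟩ := hx
  exact ((aux_unit hp hrp m).pow 2).pow j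

section TLayer
variable {p : ℕ} (hp : p.Prime) (hodd : Odd p) (h8 : p % 8 = 3) {r : ℤ}
  (hr : IsPrimitiveRoot (r : ZMod p) (p - 1)) (h2 : ¬ (p:ℤ)^2 ∣ r^(p-1) - 1)
  {m : ℕ} (hm : 1 ≤ m)
include hp hodd h8 hr h2 hm

lemma T_disj2 {v y : ZMod (p^m)} (hv : inT r (p^m) v) (hy : inT r (p^m) y)
    (hvy : v = 2 * y) : False := by
  obtain ⟨a, ha, rfl⟩ := inT_iff_even.mp hv
  obtain ⟨c, hc, rfl⟩ := inT_iff_even.mp hy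
  set D := p^(m-1)*(p-1) with hD
  have hkey : (2 : ZMod (p^m)) = (r : ZMod (p^m))^(a + c * (D-1)) := by
    have := congrArg (· * (r : ZMod (p^m))^(c * (D-1))) hvy
    rw [mul_assoc, aux_inv hp hodd hr h2 hm c, mul_one, ← pow_add] at this
    exact this.symm
  exact aux_two_odd hp h8 hm hkey (ha.add (hc.mul_right _))

lemma T_disjneg {v w : ZMod (p^m)} (hv : inT r (p^m) v) (hw : inT r (p^m) w)
    (hvw : v = -w) : False := by
  obtain ⟨a, ha, rfl⟩ := inT_iff_even.mp hv
  obtain ⟨c, hc, rfl⟩ := inT_iff_even.mp hw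
  set D := p^(m-1)*(p-1) with hD
  have hkey : (-1 : ZMod (p^m)) = (r : ZMod (p^m))^(a + c * (D-1)) := by
    have := congrArg (· * (r : ZMod (p^m))^(c * (D-1))) hvw
    rw [neg_mul, aux_inv hp hodd hr h2 hm c, ← pow_add] at this
    exact this.symm
  exact aux_negone_odd hp h8 hm hkey (ha.add (hc.mul_right _))

lemma T_cover2 {v : ZMod (p^m)} (hv : IsUnit v) :
    inT r (p^m) v ∨ ∃ y, inT r (p^m) y ∧ v = 2 * y := by
  obtain ⟨k, rfl⟩ := aux_surj hp hodd hr h2 hm hv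
  by_cases hk : Even k
  · exact Or.inl (inT_iff_even.mpr ⟨k, hk, rfl⟩)
  obtain ⟨b, hb⟩ := aux_surj hp hodd hr h2 hm (aux_unit_two hp hodd m)
  have hbodd : ¬ Even b := aux_two_odd hp h8 hm hb
  set D := p^(m-1)*(p-1) with hD
  have hDeven : Even D := by
    obtain ⟨t, ht⟩ := hodd
    have := hp.two_le
    exact Even.mul_left ⟨t, by omega⟩ _
  refine Or.inr ⟨(r : ZMod (p^m))^(k + b * (D-1)), inT_iff_even.mpr ⟨_, ?_, rfl⟩, ?_⟩
  · have hD1 : ¬ Even (D - 1) := by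
      have h1 : 1 ≤ D := by
        have := hp.two_le
        exact Nat.one_le_iff_ne_zero.mpr (Nat.mul_ne_zero (by positivity) (by omega))
      rw [Nat.even_sub h1]
      simpa using hDeven
    rw [Nat.even_add, Nat.even_mul]
    tauto
  · rw [hb, ← pow_add, show b + (k + b*(D-1)) = k + (b + b*(D-1)) by omega, pow_add, pow_add,
      aux_inv hp hodd hr h2 hm b, mul_one]

lemma T_coverneg {v : ZMod (p^m)} (hv : IsUnit v) :
    inT r (p^m) v ∨ inT r (p^m) (-v) := by
  obtain ⟨k, rfl⟩ := aux_surj hp hodd hr h2 hm hv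
  by_cases hk : Even k
  · exact Or.inl (inT_iff_even.mpr ⟨k, hk, rfl⟩)
  have hne : IsUnit (-1 : ZMod (p^m)) := isUnit_one.neg
  obtain ⟨b, hb⟩ := aux_surj hp hodd hr h2 hm hne
  have hbodd : ¬ Even b := aux_negone_odd hp h8 hm hb
  refine Or.inr (inT_iff_even.mpr ⟨b + k, ?_, ?_⟩)
  · rw [Nat.even_add]
    tauto
  · rw [pow_add, ← hb]
    ring
end TLayer

section Comb
variable {p n : ℕ}

lemma L_key (hp : p.Prime) {i : ℕ} (hi : i ≤ n) {a b : ℕ} (hab : a ≡ b [MOD p^(n-i)]) :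
    (p : ZMod (p^n))^i * (a : ZMod (p^n)) = (p : ZMod (p^n))^i * (b : ZMod (p^n)) := by
  have h1 : p^i * a ≡ p^i * b [MOD p^i * p^(n-i)] := hab.mul_left' _
  rw [← pow_add, Nat.add_sub_cancel' hi] at h1
  have := (ZMod.natCast_eq_natCast_iff _ _ _).mpr h1
  push_cast at this
  exact this

lemma L_val (hp : p.Prime) {i : ℕ} (hi : i < n) (x : ZMod (p^(n-i))) :
    ((p : ZMod (p^n))^i * ((x.val : ℕ) : ZMod (p^n))).val = p^i * x.val := by
  haveI : NeZero (p^(n-i)) := ⟨pow_ne_zero _ hp.ne_zero⟩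
  haveI : NeZero (p^n) := ⟨pow_ne_zero _ hp.ne_zero⟩
  have hlt : x.val < p^(n-i) := ZMod.val_lt x
  have hlt2 : p^i * x.val < p^n := by
    calc p^i * x.val < p^i * p^(n-i) :=
          Nat.mul_lt_mul_of_pos_left hlt (Nat.pow_pos hp.pos)
    _ = p^n := by rw [← pow_add, Nat.add_sub_cancel' (le_of_lt hi)]
  rw [show (p : ZMod (p^n))^i * ((x.val : ℕ) : ZMod (p^n)) = ((p^i * x.val : ℕ) : ZMod (p^n)) by
    push_cast; ring]
  exact ZMod.val_cast_of_lt hlt2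

lemma LL_mul (hp : p.Prime) {i : ℕ} (hi : i ≤ n) (c : ℕ) (x : ZMod (p^(n-i))) :
    (c : ZMod (p^n)) * ((p : ZMod (p^n))^i * ((x.val : ℕ) : ZMod (p^n)))
      = (p : ZMod (p^n))^i * ((((c : ZMod (p^(n-i))) * x).val : ℕ) : ZMod (p^n)) := by
  haveI : NeZero (p^(n-i)) := ⟨pow_ne_zero _ hp.ne_zero⟩
  have hmod : ((c : ZMod (p^(n-i))) * x).val ≡ c * x.val [MOD p^(n-i)] := by
    rw [← ZMod.natCast_eq_natCast_iff]
    push_cast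
    rw [ZMod.natCast_val, ZMod.cast_id, ZMod.natCast_val, ZMod.cast_id]
  rw [L_key hp hi hmod]
  push_cast
  ring

lemma L_neg (hp : p.Prime) {i : ℕ} (hi : i ≤ n) (x : ZMod (p^(n-i))) :
    -((p : ZMod (p^n))^i * ((x.val : ℕ) : ZMod (p^n)))
      = (p : ZMod (p^n))^i * (((-x).val : ℕ) : ZMod (p^n)) := by
  haveI : NeZero (p^(n-i)) := ⟨pow_ne_zero _ hp.ne_zero⟩
  have hmod : ((-x).val + x.val) ≡ 0 [MOD p^(n-i)] := by
    rw [← ZMod.natCast_eq_natCast_iff]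
    push_cast
    rw [ZMod.natCast_val, ZMod.cast_id, ZMod.natCast_val, ZMod.cast_id]
    ring
  have := L_key hp hi hmod
  push_cast at this
  linear_combination -this

lemma L_valunit (hp : p.Prime) {m : ℕ} (hm : 1 ≤ m) {x : ZMod (p^m)} (hx : IsUnit x) :
    0 < x.val ∧ ¬ p ∣ x.val := by
  haveI : NeZero (p^m) := ⟨pow_ne_zero _ hp.ne_zero⟩
  have hcop : Nat.Coprime x.val (p^m) := by
    have := ZMod.val_coe_unit_coprime hx.unit
    rwa [hx.unit_spec] at this
  constructor
  · rcases Nat.eq_zero_or_pos x.val with h | h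
    · rw [h] at hcop
      simp only [Nat.coprime_zero_left] at hcop
      have := hp.two_le
      have := Nat.one_lt_pow (by omega : m ≠ 0) (by omega : 1 < p)
      omega
    · exact h
  · intro hdvd
    have hg : p ∣ Nat.gcd x.val (p^m) := Nat.dvd_gcd hdvd (dvd_pow_self p (by omega))
    rw [hcop] at hg
    have h2p := hp.two_le
    have := Nat.le_of_dvd one_pos hg
    omega

lemma L_uniq (hp : p.Prime) {i j w v : ℕ} (hw : ¬ p ∣ w) (hv : ¬ p ∣ v)
    (h : p^i * w = p^j * v) : i = j ∧ w = v := by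
  have hij : i = j := by
    by_contra hne
    rcases Nat.lt_or_ge i j with hlt | hge
    · have hpj : p^(i+1) ∣ p^j * v := Dvd.dvd.mul_right (pow_dvd_pow p (by omega)) v
      rw [← h, pow_succ] at hpj
      have hw0 : 0 < w := by
        rcases Nat.eq_zero_or_pos w with h0 | h0
        · exact absurd (h0 ▸ dvd_zero p) hw
        · exact h0
      have : p ∣ w := by
        have hpi : 0 < p^i := Nat.pow_pos hp.pos
        have := (Nat.mul_dvd_mul_iff_left hpi).mp hpj
        exact this
      exact hw this
    · have hlt : j < i := by omega
      have hpj : p^(j+1) ∣ p^i * w := Dvd.dvd.mul_right (pow_dvd_pow p (by omega)) w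
      rw [h, pow_succ] at hpj
      have : p ∣ v := by
        have hpi : 0 < p^j := Nat.pow_pos hp.pos
        exact (Nat.mul_dvd_mul_iff_left hpi).mp hpj
      exact hv this
  subst hij
  have hpi : 0 < p^i := Nat.pow_pos hp.pos
  exact ⟨rfl, by exact Nat.eq_of_mul_eq_mul_left hpi h⟩

lemma L_decomp (hp : p.Prime) {a : ZMod (p^n)} (hn : 1 ≤ n) (ha : a ≠ 0) :
    ∃ i < n, ∃ w : ℕ, ¬ p ∣ w ∧ a.val = p^i * w := by
  haveI : NeZero (p^n) := ⟨pow_ne_zero _ hp.ne_zero⟩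
  set v := a.val with hv
  have hv0 : v ≠ 0 := fun h => ha (by rwa [← ZMod.val_eq_zero])
  have hvlt : v < p^n := ZMod.val_lt a
  set i := v.factorization p with hi
  refine ⟨i, ?_, v / p^i, Nat.not_dvd_ordCompl hp hv0, (Nat.ordProj_mul_ordCompl_eq_self v p).symm⟩
  by_contra hni
  have hle : p^n ≤ p^i := Nat.pow_le_pow_right hp.pos (by omega)
  have hle2 : p^i ≤ v := Nat.le_of_dvd (Nat.pos_of_ne_zero hv0) (Nat.ordProj_dvd v p)
  omega

lemma L_valinj {M : ℕ} [NeZero M] {x y : ZMod M} (h : x.val = y.val) : x = y := by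
  have := congrArg (fun t : ℕ => (t : ZMod M)) h
  simpa only [ZMod.natCast_val, ZMod.cast_id] using this

end Comb

section Main
variable {p n : ℕ}

lemma M_ne (hp : p.Prime) {i : ℕ} (hi : i < n) {x : ZMod (p^(n-i))} (hx : IsUnit x) :
    (p : ZMod (p^n))^i * ((x.val : ℕ) : ZMod (p^n)) ≠ 0 := by
  haveI : NeZero (p^n) := ⟨pow_ne_zero _ hp.ne_zero⟩
  intro h
  have hval := congrArg ZMod.val h
  rw [L_val hp hi, ZMod.val_zero] at hval
  have h1 := (L_valunit hp (by omega : 1 ≤ n - i) hx).1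
  have h2 : 0 < p^i := Nat.pow_pos hp.pos
  rcases Nat.mul_eq_zero.mp hval with h | h <;> omega

lemma M_rep (hp : p.Prime) {i j : ℕ} (hi : i < n) (hj : j < n)
    {x : ZMod (p^(n-i))} {y : ZMod (p^(n-j))} (hx : IsUnit x) (hy : IsUnit y)
    (h : (p : ZMod (p^n))^i * ((x.val : ℕ) : ZMod (p^n))
       = (p : ZMod (p^n))^j * ((y.val : ℕ) : ZMod (p^n))) :
    i = j ∧ x.val = y.val := by
  have h1 := congrArg ZMod.val h
  rw [L_val hp hi, L_val hp hj] at h1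
  exact L_uniq hp (L_valunit hp (by omega : 1 ≤ n - i) hx).2
    (L_valunit hp (by omega : 1 ≤ n - j) hy).2 h1

lemma M_exists (hp : p.Prime) (hn : 1 ≤ n) {a : ZMod (p^n)} (ha : a ≠ 0) :
    ∃ i, i < n ∧ ∃ x : ZMod (p^(n-i)), IsUnit x ∧
      a = (p : ZMod (p^n))^i * ((x.val : ℕ) : ZMod (p^n)) := by
  haveI : NeZero (p^n) := ⟨pow_ne_zero _ hp.ne_zero⟩
  obtain ⟨i, hi, w, hw, hval⟩ := L_decomp hp hn ha
  haveI : NeZero (p^(n-i)) := ⟨pow_ne_zero _ hp.ne_zero⟩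
  have hwlt : w < p^(n-i) := by
    have hvlt : a.val < p^n := ZMod.val_lt a
    have hsplit : p^i * p^(n-i) = p^n := by
      rw [← pow_add, Nat.add_sub_cancel' (le_of_lt hi)]
    have hpi : 0 < p^i := Nat.pow_pos hp.pos
    by_contra hge
    have : p^i * p^(n-i) ≤ p^i * w := Nat.mul_le_mul_left _ (by omega)
    omega
  refine ⟨i, hi, (w : ZMod (p^(n-i))), ?_, ?_⟩
  · have : ((w : ZMod (p^(n-i)))) = ((w:ℕ) : ZMod (p^(n-i))) := rfl
    exact aux_unit_nat hp hw (n-i)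
  · apply L_valinj
    rw [L_val hp hi, ZMod.val_cast_of_lt hwlt]
    exact hval

end Main

/-- Theorem 3.1: for a prime `p ≡ 3 (mod 8)`, `p ≠ 3`, `n ≥ 1`, and a primitive root `r`
mod `p` with `r^{p-1} ≢ 1 (mod p²)`, the union over `i = 0, …, n-1` of the sets
`p^i·S_{p^{n-i}} = {{p^i·x, 2·p^i·x} : x ∈ ⟨r²⟩_{p^{n-i}}}` (with `x` represented by
its least positive residue) is a strong Skolem starter for `ℤ_{p^n}`. -/
theorem strong_skolem_starter_prime_power (p n : ℕ) (hp : p.Prime) (h8 : p % 8 = 3)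
    (hp3 : p ≠ 3) (hn : 1 ≤ n) (r : ℤ)
    (hr : IsPrimitiveRoot (r : ZMod p) (p - 1))
    (hr2 : (r : ZMod (p ^ 2)) ^ (p - 1) ≠ 1) :
    IsStrongSkolemStarter (p ^ n)
      {z | ∃ i < n, ∃ x : ZMod (p ^ (n - i)),
        (∃ j : ℕ, x = ((r : ZMod (p ^ (n - i))) ^ 2) ^ j) ∧
        z = s((p : ZMod (p ^ n)) ^ i * (x.val : ZMod (p ^ n)),
              2 * ((p : ZMod (p ^ n)) ^ i * (x.val : ZMod (p ^ n))))} := by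
  have hodd : Odd p := Nat.odd_iff.mpr (by omega)
  have hrp : ¬ (p:ℤ) ∣ r := aux_hrp hp hr
  have h2' : ¬ (p:ℤ)^2 ∣ r^(p-1) - 1 := by
    intro hd
    apply hr2
    have hz : ((r^(p-1) - 1 : ℤ) : ZMod (p^2)) = 0 := by
      rw [ZMod.intCast_zmod_eq_zero_iff_dvd]
      exact_mod_cast hd
    push_cast at hz
    rw [sub_eq_zero] at hz
    exact hz
  haveI : NeZero (p^n) := ⟨pow_ne_zero _ hp.ne_zero⟩
  -- helper: 2 * phi = phi (2 * x), 3 * phi = phi (3 * x)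
  have h2phi : ∀ (i : ℕ), i < n → ∀ (x : ZMod (p^(n-i))),
      2 * ((p : ZMod (p^n))^i * ((x.val : ℕ) : ZMod (p^n)))
        = (p : ZMod (p^n))^i * ((((2 : ZMod (p^(n-i))) * x).val : ℕ) : ZMod (p^n)) := by
    intro i hi x
    have := LL_mul (n := n) hp (le_of_lt hi) 2 x
    simpa using this
  have h3phi : ∀ (i : ℕ), i < n → ∀ (x : ZMod (p^(n-i))),
      3 * ((p : ZMod (p^n))^i * ((x.val : ℕ) : ZMod (p^n)))
        = (p : ZMod (p^n))^i * ((((3 : ZMod (p^(n-i))) * x).val : ℕ) : ZMod (p^n)) := by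
    intro i hi x
    have := LL_mul (n := n) hp (le_of_lt hi) 3 x
    simpa using this
  have hstarter : IsStarter (p^n)
      {z | ∃ i < n, ∃ x : ZMod (p ^ (n - i)),
        (∃ j : ℕ, x = ((r : ZMod (p ^ (n - i))) ^ 2) ^ j) ∧
        z = s((p : ZMod (p ^ n)) ^ i * (x.val : ZMod (p ^ n)),
              2 * ((p : ZMod (p ^ n)) ^ i * (x.val : ZMod (p ^ n))))} := by
    refine ⟨?_, ?_, ?_, ?_⟩
    · -- not diagonal
      rintro z ⟨i, hi, x, hxT, rfl⟩
      rw [Sym2.mk_isDiag_iff]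
      intro h
      have hxu : IsUnit x := inT_unit hp hrp hxT
      have h0 : (p : ZMod (p^n))^i * ((x.val : ℕ) : ZMod (p^n)) = 0 := by
        linear_combination -h
      exact M_ne hp hi hxu h0
    · -- 0 not in any pair
      rintro z ⟨i, hi, x, hxT, rfl⟩ h0
      have hxu : IsUnit x := inT_unit hp hrp hxT
      rw [Sym2.mem_iff] at h0
      rcases h0 with h | h
      · exact M_ne hp hi hxu h.symm
      · rw [h2phi i hi x] at h
        have h2xu : IsUnit ((2 : ZMod (p^(n-i))) * x) := (aux_unit_two hp hodd _).mul hxu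
        exact M_ne hp hi h2xu h.symm
    · -- unique pair containing a
      intro a ha
      obtain ⟨i, hi, ξ, hξu, rfl⟩ := M_exists hp hn ha
      haveI : NeZero (p^(n-i)) := ⟨pow_ne_zero _ hp.ne_zero⟩
      have hm : 1 ≤ n - i := by omega
      rcases T_cover2 hp hodd h8 hr h2' hm hξu with hmem | ⟨y, hyT, hy2⟩
      · refine ⟨s((p : ZMod (p^n))^i * ((ξ.val : ℕ) : ZMod (p^n)),
          2 * ((p : ZMod (p^n))^i * ((ξ.val : ℕ) : ZMod (p^n)))),
          ⟨⟨i, hi, ξ, hmem, rfl⟩, Sym2.mem_iff.mpr (Or.inl rfl)⟩, ?_⟩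
        rintro z' ⟨⟨i', hi', x', hx'T, rfl⟩, hmem'⟩
        have hx'u : IsUnit x' := inT_unit hp hrp hx'T
        rw [Sym2.mem_iff] at hmem'
        rcases hmem' with h | h
        · obtain ⟨hii, hval⟩ := M_rep hp hi hi' hξu hx'u h
          subst hii
          rw [← L_valinj hval]
        · rw [h2phi i' hi' x'] at h
          obtain ⟨hii, hval⟩ := M_rep hp hi hi' hξu ((aux_unit_two hp hodd _).mul hx'u) h
          subst hii
          have hx2 : ξ = (2 : ZMod (p^(n-i))) * x' := L_valinj hval
          exact (T_disj2 hp hodd h8 hr h2' hm hmem hx'T hx2).elim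
      · have hyu : IsUnit y := inT_unit hp hrp hyT
        refine ⟨s((p : ZMod (p^n))^i * ((y.val : ℕ) : ZMod (p^n)),
          2 * ((p : ZMod (p^n))^i * ((y.val : ℕ) : ZMod (p^n)))),
          ⟨⟨i, hi, y, hyT, rfl⟩, ?_⟩, ?_⟩
        · rw [Sym2.mem_iff]
          right
          rw [h2phi i hi y, hy2]
        · rintro z' ⟨⟨i', hi', x', hx'T, rfl⟩, hmem'⟩
          have hx'u : IsUnit x' := inT_unit hp hrp hx'T
          rw [Sym2.mem_iff] at hmem'
          rcases hmem' with h | h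
          · obtain ⟨hii, hval⟩ := M_rep hp hi hi' hξu hx'u h
            subst hii
            have hx'2y : x' = 2 * y := by rw [← L_valinj hval, hy2]
            exact (T_disj2 hp hodd h8 hr h2' hm hx'T hyT hx'2y).elim
          · rw [h2phi i' hi' x'] at h
            obtain ⟨hii, hval⟩ := M_rep hp hi hi' hξu ((aux_unit_two hp hodd _).mul hx'u) h
            subst hii
            have h2eq : (2 : ZMod (p^(n-i))) * y = (2 : ZMod (p^(n-i))) * x' := by
              rw [← hy2]
              exact L_valinj hval
            rw [← (aux_unit_two hp hodd _).mul_left_cancel h2eq]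
    · -- unique pair with difference a
      intro a ha
      obtain ⟨i, hi, ξ, hξu, rfl⟩ := M_exists hp hn ha
      haveI : NeZero (p^(n-i)) := ⟨pow_ne_zero _ hp.ne_zero⟩
      have hm : 1 ≤ n - i := by omega
      have hneg := L_neg (n := n) hp (le_of_lt hi) ξ
      rcases T_coverneg hp hodd h8 hr h2' hm hξu with hmem | hmemneg
      · refine ⟨s((p : ZMod (p^n))^i * ((ξ.val : ℕ) : ZMod (p^n)),
          2 * ((p : ZMod (p^n))^i * ((ξ.val : ℕ) : ZMod (p^n)))),
          ⟨⟨i, hi, ξ, hmem, rfl⟩,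
           2 * ((p : ZMod (p^n))^i * ((ξ.val : ℕ) : ZMod (p^n))),
           (p : ZMod (p^n))^i * ((ξ.val : ℕ) : ZMod (p^n)), Sym2.eq_swap, by ring⟩, ?_⟩
        rintro z' ⟨⟨i', hi', x', hx'T, rfl⟩, u, v, huv, hsub⟩
        have hx'u : IsUnit x' := inT_unit hp hrp hx'T
        rw [Sym2.eq_iff] at huv
        rcases huv with ⟨hu, hv⟩ | ⟨hv, hu⟩
        · subst hu; subst hv
          have hAeq : (p : ZMod (p^n))^i' * ((x'.val : ℕ) : ZMod (p^n))
              = (p : ZMod (p^n))^i * (((-ξ).val : ℕ) : ZMod (p^n)) := by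
            linear_combination - hsub + hneg
          obtain ⟨hii, hval⟩ := M_rep hp hi' hi hx'u hξu.neg hAeq
          subst hii
          have hxneg : x' = -ξ := L_valinj hval
          exact (T_disjneg hp hodd h8 hr h2' hm hx'T hmem hxneg).elim
        · subst hu; subst hv
          have hAeq : (p : ZMod (p^n))^i * ((ξ.val : ℕ) : ZMod (p^n))
              = (p : ZMod (p^n))^i' * ((x'.val : ℕ) : ZMod (p^n)) := by
            linear_combination - hsub
          obtain ⟨hii, hval⟩ := M_rep hp hi hi' hξu hx'u hAeq
          subst hii
          rw [← L_valinj hval]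
      · refine ⟨s((p : ZMod (p^n))^i * (((-ξ).val : ℕ) : ZMod (p^n)),
          2 * ((p : ZMod (p^n))^i * (((-ξ).val : ℕ) : ZMod (p^n)))),
          ⟨⟨i, hi, -ξ, hmemneg, rfl⟩,
           (p : ZMod (p^n))^i * (((-ξ).val : ℕ) : ZMod (p^n)),
           2 * ((p : ZMod (p^n))^i * (((-ξ).val : ℕ) : ZMod (p^n))), rfl,
           by linear_combination hneg⟩, ?_⟩
        rintro z' ⟨⟨i', hi', x', hx'T, rfl⟩, u, v, huv, hsub⟩
        have hx'u : IsUnit x' := inT_unit hp hrp hx'T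
        rw [Sym2.eq_iff] at huv
        rcases huv with ⟨hu, hv⟩ | ⟨hv, hu⟩
        · subst hu; subst hv
          have hAeq : (p : ZMod (p^n))^i' * ((x'.val : ℕ) : ZMod (p^n))
              = (p : ZMod (p^n))^i * (((-ξ).val : ℕ) : ZMod (p^n)) := by
            linear_combination - hsub + hneg
          obtain ⟨hii, hval⟩ := M_rep hp hi' hi hx'u hξu.neg hAeq
          subst hii
          rw [L_valinj hval]
        · subst hu; subst hv
          have hAeq : (p : ZMod (p^n))^i * ((ξ.val : ℕ) : ZMod (p^n))
              = (p : ZMod (p^n))^i' * ((x'.val : ℕ) : ZMod (p^n)) := by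
            linear_combination - hsub
          obtain ⟨hii, hval⟩ := M_rep hp hi hi' hξu hx'u hAeq
          subst hii
          have hxx : -ξ = -x' := by rw [L_valinj hval]
          exact (T_disjneg hp hodd h8 hr h2' hm hmemneg hx'T hxx).elim
  refine ⟨⟨hstarter, ?_, ?_⟩, hstarter, ?_⟩
  · -- sums nonzero
    rintro z ⟨i, hi, x, hxT, rfl⟩
    have hxu : IsUnit x := inT_unit hp hrp hxT
    have hsum : pairSum s((p : ZMod (p^n))^i * ((x.val : ℕ) : ZMod (p^n)),
        2 * ((p : ZMod (p^n))^i * ((x.val : ℕ) : ZMod (p^n))))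
        = 3 * ((p : ZMod (p^n))^i * ((x.val : ℕ) : ZMod (p^n))) := by
      simp [pairSum]
      ring
    rw [hsum, h3phi i hi x]
    exact M_ne hp hi ((aux_unit_three hp hp3 _).mul hxu)
  · -- sums injective
    rintro z ⟨i, hi, x, hxT, rfl⟩ w ⟨i', hi', x', hx'T, rfl⟩ hsum
    have hxu : IsUnit x := inT_unit hp hrp hxT
    have hx'u : IsUnit x' := inT_unit hp hrp hx'T
    have h3 : (p : ZMod (p^n))^i * ((((3 : ZMod (p^(n-i))) * x).val : ℕ) : ZMod (p^n))
        = (p : ZMod (p^n))^i' * ((((3 : ZMod (p^(n-i'))) * x').val : ℕ) : ZMod (p^n)) := by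
      rw [← h3phi i hi x, ← h3phi i' hi' x']
      simp [pairSum] at hsum
      linear_combination hsum
    obtain ⟨rfl, hval⟩ := M_rep hp hi hi'
      ((aux_unit_three hp hp3 _).mul hxu) ((aux_unit_three hp hp3 _).mul hx'u) h3
    haveI : NeZero (p^(n-i)) := ⟨pow_ne_zero _ hp.ne_zero⟩
    have h3x : (3 : ZMod (p^(n-i))) * x = (3 : ZMod (p^(n-i))) * x' := L_valinj hval
    have hxx : x = x' := (aux_unit_three hp hp3 _).mul_left_cancel h3x
    rw [hxx]
  · -- Skolem
    intro i0 h1 hhalf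
    have hplt : 1 < p^n := Nat.one_lt_pow (by omega) hp.one_lt
    have hi0lt : i0 < p^n := by omega
    have h2i0 : 2 * i0 < p^n := by omega
    set a0 : ZMod (p^n) := ((i0 : ℕ) : ZMod (p^n)) with ha0
    have ha0val : a0.val = i0 := ZMod.val_cast_of_lt hi0lt
    have ha0ne : a0 ≠ 0 := by
      intro h
      rw [h, ZMod.val_zero] at ha0val
      omega
    obtain ⟨j, hj, ξ, hξu, hrep⟩ := M_exists hp hn ha0ne
    haveI : NeZero (p^(n-j)) := ⟨pow_ne_zero _ hp.ne_zero⟩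
    have hm : 1 ≤ n - j := by omega
    have hvals : i0 = p^j * ξ.val := by
      have hv := congrArg ZMod.val hrep
      rw [L_val hp hj] at hv
      omega
    have hpj : 0 < p^j := Nat.pow_pos hp.pos
    have hv1 : 1 ≤ ξ.val := by
      rcases Nat.eq_zero_or_pos ξ.val with h | h
      · rw [h, Nat.mul_zero] at hvals; omega
      · exact h
    have hsplit : p^j * p^(n-j) = p^n := by
      rw [← pow_add, Nat.add_sub_cancel' (le_of_lt hj)]
    have hξlt : 2 * ξ.val < p^(n-j) := by
      have hq : p^j * (2 * ξ.val) < p^j * p^(n-j) := by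
        calc p^j * (2 * ξ.val) = 2 * i0 := by rw [hvals]; ring
        _ < p^n := h2i0
        _ = p^j * p^(n-j) := hsplit.symm
      exact Nat.lt_of_mul_lt_mul_left hq
    have h2ξval : ((2 : ZMod (p^(n-j))) * ξ).val = 2 * ξ.val := by
      have hc : (2 : ZMod (p^(n-j))) * ξ = ((2 * ξ.val : ℕ) : ZMod (p^(n-j))) := by
        push_cast
        rw [ZMod.natCast_val, ZMod.cast_id]
      rw [hc, ZMod.val_cast_of_lt hξlt]
    rcases T_coverneg hp hodd h8 hr h2' hm hξu with hmem | hmemneg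
    · refine ⟨s((p : ZMod (p^n))^j * ((ξ.val : ℕ) : ZMod (p^n)),
        2 * ((p : ZMod (p^n))^j * ((ξ.val : ℕ) : ZMod (p^n)))),
        ⟨j, hj, ξ, hmem, rfl⟩,
        (p : ZMod (p^n))^j * ((ξ.val : ℕ) : ZMod (p^n)),
        2 * ((p : ZMod (p^n))^j * ((ξ.val : ℕ) : ZMod (p^n))), rfl, ?_, ?_⟩
      · rw [h2phi j hj ξ, L_val hp hj, L_val hp hj, h2ξval]
        exact Nat.mul_lt_mul_of_pos_left (by omega) hpj
      · rw [hrep]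
        ring
    · haveI : Fact (1 < p^(n-j)) := ⟨Nat.one_lt_pow (by omega) hp.one_lt⟩
      have hξne : ξ ≠ 0 := hξu.ne_zero
      haveI : NeZero ξ := ⟨hξne⟩
      have hnegval : (-ξ).val = p^(n-j) - ξ.val := ZMod.val_neg_of_ne_zero ξ
      have h2ξne : (2 : ZMod (p^(n-j))) * ξ ≠ 0 := ((aux_unit_two hp hodd _).mul hξu).ne_zero
      haveI : NeZero ((2 : ZMod (p^(n-j))) * ξ) := ⟨h2ξne⟩
      have hneg2val : (-((2 : ZMod (p^(n-j))) * ξ)).val = p^(n-j) - 2 * ξ.val := by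
        rw [ZMod.val_neg_of_ne_zero, h2ξval]
      have hneg := L_neg (n := n) hp (le_of_lt hj) ξ
      refine ⟨s((p : ZMod (p^n))^j * (((-ξ).val : ℕ) : ZMod (p^n)),
        2 * ((p : ZMod (p^n))^j * (((-ξ).val : ℕ) : ZMod (p^n)))),
        ⟨j, hj, -ξ, hmemneg, rfl⟩,
        2 * ((p : ZMod (p^n))^j * (((-ξ).val : ℕ) : ZMod (p^n))),
        (p : ZMod (p^n))^j * (((-ξ).val : ℕ) : ZMod (p^n)), Sym2.eq_swap, ?_, ?_⟩
      · rw [h2phi j hj (-ξ), L_val hp hj, L_val hp hj]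
        have h2negx : (2 : ZMod (p^(n-j))) * (-ξ) = -((2 : ZMod (p^(n-j))) * ξ) := by ring
        rw [h2negx, hneg2val, hnegval]
        exact Nat.mul_lt_mul_of_pos_left (by omega) hpj
      · rw [hrep]
        linear_combination hneg
end

section
/- Let p ≡ 3 (mod 8) be an odd prime with p ≠ 3, let n ≥ 1 be an integer, and let r be a primitive root modulo p such that r^{p−1} ≢ 1 (mod p²). For i = 0,…,n−1 let p^i·Ŝ_{p^{n−i}} = {{p^i·x mod p^n, 2^{−1}·p^i·x mod p^n} : x ∈ ⟨r²⟩_{p^{n−i}}}, where 2^{−1} denotes the inverse of 2 modulo p^{n−i} and elements of ⟨r²⟩_{p^{n−i}} are represented by their least positive residues. Then Ŝ = ⋃_{i=0}^{n−1} p^i·Ŝ_{p^{n−i}} is a strong Skolem starter for ℤ_{p^n}. -/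
section
variable (p : ℕ) (hp : p.Prime) (h8 : p % 8 = 3) (r : ℤ)
  (hr : IsPrimitiveRoot (r : ZMod p) (p - 1))
  (hr2 : (r : ZMod (p ^ 2)) ^ (p - 1) ≠ 1)

include hp h8

lemma p_odd : Odd p := by
  rcases Nat.even_or_odd p with h | h
  · exfalso; rw [Nat.even_iff] at h; omega
  · exact h

lemma p_big : 3 ≤ p := by
  have := hp.two_le; omega

include hr in
lemma r_not_dvd : ¬ (p : ℤ) ∣ r := by
  intro h
  haveI : Fact p.Prime := ⟨hp⟩
  have h0 : (r : ZMod p) = 0 := by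
    rwa [← ZMod.intCast_zmod_eq_zero_iff_dvd] at h
  have h1 : (r : ZMod p) ^ (p - 1) = 1 := hr.pow_eq_one
  rw [h0, zero_pow (by have := hp.two_le; omega)] at h1
  exact zero_ne_one h1

-- key characterization: r^k = 1 mod p^m iff p^m ∣ r^k - 1
lemma rpow_eq_one_iff (m k : ℕ) [NeZero (p^m)] :
    (r : ZMod (p ^ m)) ^ k = 1 ↔ (p : ℤ) ^ m ∣ r ^ k - 1 := by
  have : ((r ^ k - 1 : ℤ) : ZMod (p ^ m)) = (r : ZMod (p^m)) ^ k - 1 := by push_cast; ring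
  rw [← sub_eq_zero, ← this, ZMod.intCast_zmod_eq_zero_iff_dvd]
  push_cast
  rfl

include hr hr2 in
lemma emult_base : emultiplicity (p : ℤ) (r ^ (p - 1) - 1) = (1 : ℕ) := by
  haveI : NeZero (p^1) := ⟨by have := hp.two_le; positivity⟩
  haveI : NeZero (p^2) := ⟨by have := hp.two_le; positivity⟩
  haveI : Fact p.Prime := ⟨hp⟩
  rw [emultiplicity_eq_coe]
  constructor
  · have h0 : ((r ^ (p-1) - 1 : ℤ) : ZMod p) = 0 := by push_cast [hr.pow_eq_one]; ring
    rw [pow_one]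
    exact (ZMod.intCast_zmod_eq_zero_iff_dvd _ p).mp h0
  · rw [show (1:ℕ)+1 = 2 by rfl, ← rpow_eq_one_iff p hp h8 r]
    exact hr2

include hr hr2 in
lemma emult_lte (a : ℕ) :
    emultiplicity (p : ℤ) (r ^ ((p - 1) * p ^ a) - 1) = (1 + a : ℕ) := by
  have hxy : (p:ℤ) ∣ r ^ (p-1) - 1 := by
    have h := emult_base p hp h8 r hr hr2
    have := pow_dvd_iff_le_emultiplicity (a := (p:ℤ)) (b := r ^ (p-1) - 1) (k := 1)
    rw [h] at this
    simpa using this.mpr (by norm_cast)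
  have hx : ¬ (p:ℤ) ∣ r ^ (p-1) := fun h =>
    r_not_dvd p hp h8 r hr ((Nat.prime_iff_prime_int.mp hp).dvd_of_dvd_pow h)
  have key := emultiplicity_pow_prime_pow_sub_pow_prime_pow (R := ℤ) (p := p)
    (Nat.prime_iff_prime_int.mp hp) (p_odd p hp h8) hxy hx a
  rw [one_pow] at key
  rw [pow_mul, key, emult_base p hp h8 r hr hr2]
  norm_cast

include hr in
lemma r_unit (m : ℕ) (hm : 1 ≤ m) : IsUnit (r : ZMod (p ^ m)) := by
  haveI : NeZero (p ^ m) := ⟨pow_ne_zero _ hp.pos.ne'⟩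
  have hnd := r_not_dvd p hp h8 r hr
  have hv : (((r : ZMod (p ^ m)).val : ℕ) : ZMod (p ^ m)) = (r : ZMod (p ^ m)) :=
    ZMod.natCast_rightInverse _
  rw [← hv, ZMod.isUnit_iff_coprime, Nat.coprime_pow_right_iff hm, Nat.coprime_comm,
    Nat.Prime.coprime_iff_not_dvd hp]
  intro hdvd
  apply hnd
  have hmod : ((((r : ZMod (p ^ m)).val : ℤ)) : ZMod (p ^ m)) = ((r : ℤ) : ZMod (p ^ m)) := by
    push_cast
    rw [hv]
  have h2 : ((p : ℤ) ^ m) ∣ (r - ((r : ZMod (p ^ m)).val : ℤ)) := by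
    have hmm := (ZMod.intCast_eq_intCast_iff _ _ _).mp hmod
    have := hmm.dvd
    push_cast at this
    exact this
  have h3 : (p : ℤ) ∣ (r - ((r : ZMod (p ^ m)).val : ℤ)) :=
    dvd_trans (dvd_pow_self _ (by omega)) h2
  have h4 : (p : ℤ) ∣ ((r : ZMod (p ^ m)).val : ℤ) := Int.natCast_dvd_natCast.mpr hdvd
  have := dvd_add h3 h4
  simpa using this

include hr hr2 in
lemma r_gen (m : ℕ) (hm : 1 ≤ m) (x : ZMod (p ^ m)) (hx : IsUnit x) :
    ∃ k : ℕ, x = (r : ZMod (p ^ m)) ^ k := by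
  haveI : Fact p.Prime := ⟨hp⟩
  haveI : NeZero (p ^ m) := ⟨pow_ne_zero _ hp.pos.ne'⟩
  have hru : IsUnit (r : ZMod (p ^ m)) := r_unit p hp h8 r hr m hm
  set u := hru.unit with hu
  have hcard : Nat.card (ZMod (p ^ m))ˣ = p ^ (m - 1) * (p - 1) := by
    rw [Nat.card_eq_fintype_card, ZMod.card_units_eq_totient, Nat.totient_prime_pow hp hm]
  have hpowr : ∀ k : ℕ, (r : ZMod (p ^ m)) ^ k = ((u ^ k : (ZMod (p ^ m))ˣ) : ZMod (p ^ m)) := by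
    intro k
    rw [Units.val_pow_eq_pow_val, IsUnit.unit_spec]
  have hord : orderOf u = p ^ (m - 1) * (p - 1) := by
    have hdvd : orderOf u ∣ p ^ (m - 1) * (p - 1) := hcard ▸ orderOf_dvd_natCard u
    have hp1 : (p - 1) ∣ orderOf u := by
      apply hr.dvd_of_pow_eq_one
      have h2 : (r : ZMod (p ^ m)) ^ orderOf u = 1 := by
        rw [hpowr, pow_orderOf_eq_one]; rfl
      have h3 := congrArg (ZMod.castHom (dvd_pow_self p (by omega : m ≠ 0)) (ZMod p)) h2
      rw [map_pow, map_intCast, map_one] at h3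
      exact h3
    obtain ⟨c, hc⟩ := hp1
    have hppos : 0 < p - 1 := by have := hp.two_le; omega
    have hcdvd : c ∣ p ^ (m - 1) := by
      rw [hc, mul_comm _ c] at hdvd
      exact (mul_dvd_mul_iff_right hppos.ne').mp hdvd
    obtain ⟨j, hj, hcj⟩ := (Nat.dvd_prime_pow hp).mp hcdvd
    have hjm : j = m - 1 := by
      by_contra hne
      have hj2 : j ≤ m - 2 := by omega
      have h1 : u ^ ((p - 1) * p ^ j) = 1 := by
        apply orderOf_dvd_iff_pow_eq_one.mp
        rw [hc, hcj]
      have h2 : (r : ZMod (p ^ m)) ^ ((p - 1) * p ^ j) = 1 := by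
        rw [hpowr, h1]; rfl
      have h3 := (rpow_eq_one_iff p hp h8 r m _).mp h2
      have h4 : (m : ℕ∞) ≤ emultiplicity (p : ℤ) (r ^ ((p - 1) * p ^ j) - 1) :=
        pow_dvd_iff_le_emultiplicity.mp h3
      rw [emult_lte p hp h8 r hr hr2 j] at h4
      have h5 : m ≤ 1 + j := by exact_mod_cast h4
      omega
    rw [hc, hcj, hjm, mul_comm]
  have htop : Subgroup.zpowers u = ⊤ := by
    apply Subgroup.eq_top_of_card_eq
    rw [Nat.card_zpowers, hord, hcard]
  have hmem : hx.unit ∈ Submonoid.powers u := by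
    rw [mem_powers_iff_mem_zpowers, htop]
    trivial
  obtain ⟨k, hk⟩ := hmem
  refine ⟨k, ?_⟩
  have := congrArg Units.val hk
  simp only [Units.val_pow_eq_pow_val, IsUnit.unit_spec] at this
  rw [← this]
  rfl


lemma not_sq_two (m : ℕ) (hm : 1 ≤ m) : ¬ IsSquare (2 : ZMod (p ^ m)) := by
  haveI : Fact p.Prime := ⟨hp⟩
  intro h
  have h2 := h.map (ZMod.castHom (dvd_pow_self p (by omega : m ≠ 0)) (ZMod p))
  rw [map_ofNat] at h2
  rw [ZMod.exists_sq_eq_two_iff (by omega : p ≠ 2)] at h2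
  omega

lemma not_sq_neg_one (m : ℕ) (hm : 1 ≤ m) : ¬ IsSquare (-1 : ZMod (p ^ m)) := by
  haveI : Fact p.Prime := ⟨hp⟩
  intro h
  have h2 := h.map (ZMod.castHom (dvd_pow_self p (by omega : m ≠ 0)) (ZMod p))
  rw [map_neg, map_one] at h2
  rw [ZMod.exists_sq_eq_neg_one_iff] at h2
  have : p % 4 = 3 := by omega
  exact h2 this

-- cancellation: if u is a unit square and u*v is a square then v is a square
lemma sq_cancel (M : ℕ) (u v : ZMod M) (hu : IsUnit u) (hsu : IsSquare u)
    (h : IsSquare (u * v)) : IsSquare v := by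
  obtain ⟨t, ht⟩ := hsu
  obtain ⟨s, hs⟩ := h
  have htu : IsUnit t := by
    have : IsUnit (t * t) := ht ▸ hu
    exact (isUnit_of_mul_isUnit_left (by rwa [mul_comm] at this))
  refine ⟨s * t⁻¹, ?_⟩
  have h1 : t⁻¹ * t = 1 := ZMod.inv_mul_of_unit t htu
  have : v = (t⁻¹ * t) * (t⁻¹ * t) * v := by rw [h1]; ring
  rw [this]
  calc (t⁻¹ * t) * (t⁻¹ * t) * v = (t * t * v) * (t⁻¹ * t⁻¹) := by ring
  _ = (s * s) * (t⁻¹ * t⁻¹) := by rw [← ht, ← hs]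
  _ = s * t⁻¹ * (s * t⁻¹) := by ring

include hr hr2 in
lemma mul_not_sq (m : ℕ) (hm : 1 ≤ m) (u v : ZMod (p ^ m)) (hu : IsUnit u) (hv : IsUnit v)
    (h1 : ¬ IsSquare u) (h2 : ¬ IsSquare v) : IsSquare (u * v) := by
  obtain ⟨a, ha⟩ := r_gen p hp h8 r hr hr2 m hm u hu
  obtain ⟨b, hb⟩ := r_gen p hp h8 r hr hr2 m hm v hv
  have hodd : ∀ (w : ZMod (p ^ m)) (c : ℕ), w = (r : ZMod (p ^ m)) ^ c → ¬ IsSquare w → Odd c := by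
    intro w c hw hns
    rcases Nat.even_or_odd c with he | ho
    · exfalso
      obtain ⟨d, hd⟩ := he
      exact hns ⟨(r : ZMod (p ^ m)) ^ d, by rw [hw, hd, ← pow_add]⟩
    · exact ho
  have ha' := hodd u a ha h1
  have hb' := hodd v b hb h2
  have : Even (a + b) := Odd.add_odd ha' hb'
  obtain ⟨d, hd⟩ := this
  exact ⟨(r : ZMod (p ^ m)) ^ d, by rw [ha, hb, ← pow_add, hd, ← pow_add]⟩


lemma two_unit (m : ℕ) : IsUnit (2 : ZMod (p ^ m)) := by
  have : ((2 : ℕ) : ZMod (p ^ m)) = (2 : ZMod (p ^ m)) := by norm_num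
  rw [← this, ZMod.isUnit_iff_coprime]
  have hodd : Odd (p ^ m) := (p_odd p hp h8).pow
  rwa [Nat.coprime_two_left]

include hr hr2 in
lemma qr_iff (m : ℕ) (hm : 1 ≤ m) (x : ZMod (p ^ m)) :
    (∃ j : ℕ, x = ((r : ZMod (p ^ m)) ^ 2) ^ j) ↔ IsUnit x ∧ IsSquare x := by
  have hru : IsUnit (r : ZMod (p ^ m)) := r_unit p hp h8 r hr m hm
  constructor
  · rintro ⟨j, rfl⟩
    constructor
    · exact (hru.pow 2).pow j
    · exact ⟨(r : ZMod (p ^ m)) ^ j, by rw [← pow_add, ← two_mul, pow_mul]⟩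
  · rintro ⟨hux, hsx⟩
    obtain ⟨y, hy⟩ := hsx
    have huy : IsUnit y := by
      have : IsUnit (y * y) := hy ▸ hux
      exact isUnit_of_mul_isUnit_left this
    obtain ⟨k, hk⟩ := r_gen p hp h8 r hr hr2 m hm y huy
    exact ⟨k, by rw [hy, hk, ← pow_add, ← two_mul, pow_mul]⟩

include hr hr2 in
lemma qr_two_dichotomy (m : ℕ) (hm : 1 ≤ m) (t : ZMod (p ^ m)) (ht : IsUnit t) :
    ((∃ j : ℕ, t = ((r : ZMod (p ^ m)) ^ 2) ^ j) ∧ ¬ (∃ j : ℕ, 2 * t = ((r : ZMod (p ^ m)) ^ 2) ^ j))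
    ∨ (¬ (∃ j : ℕ, t = ((r : ZMod (p ^ m)) ^ 2) ^ j) ∧ (∃ j : ℕ, 2 * t = ((r : ZMod (p ^ m)) ^ 2) ^ j)) := by
  have h2u := two_unit p hp h8 m
  have h2t : IsUnit (2 * t) := h2u.mul ht
  have hns2 := not_sq_two p hp h8 m hm
  rw [qr_iff p hp h8 r hr hr2 m hm, qr_iff p hp h8 r hr hr2 m hm]
  by_cases hsq : IsSquare t
  · left
    refine ⟨⟨ht, hsq⟩, ?_⟩
    rintro ⟨-, hs2t⟩
    exact hns2 (sq_cancel p hp h8 _ t 2 ht hsq (by rwa [mul_comm]))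
  · right
    refine ⟨fun h => hsq h.2, ⟨h2t, ?_⟩⟩
    exact mul_not_sq p hp h8 r hr hr2 m hm 2 t h2u ht hns2 hsq

include hr hr2 in
lemma qr_neg_dichotomy (m : ℕ) (hm : 1 ≤ m) (w : ZMod (p ^ m)) (hw : IsUnit w) :
    ((∃ j : ℕ, w = ((r : ZMod (p ^ m)) ^ 2) ^ j) ∧ ¬ (∃ j : ℕ, -w = ((r : ZMod (p ^ m)) ^ 2) ^ j))
    ∨ (¬ (∃ j : ℕ, w = ((r : ZMod (p ^ m)) ^ 2) ^ j) ∧ (∃ j : ℕ, -w = ((r : ZMod (p ^ m)) ^ 2) ^ j)) := by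
  have hnu : IsUnit (-1 : ZMod (p ^ m)) := IsUnit.neg isUnit_one
  have hnw : IsUnit (-w) := hw.neg
  have hnsn := not_sq_neg_one p hp h8 m hm
  rw [qr_iff p hp h8 r hr hr2 m hm, qr_iff p hp h8 r hr hr2 m hm]
  by_cases hsq : IsSquare w
  · left
    refine ⟨⟨hw, hsq⟩, ?_⟩
    rintro ⟨-, hsnw⟩
    apply hnsn
    have : -w = w * (-1) := by ring
    rw [this] at hsnw
    exact sq_cancel p hp h8 _ w (-1) hw hsq hsnw
  · right
    refine ⟨fun h => hsq h.2, ⟨hnw, ?_⟩⟩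
    have : -w = (-1) * w := by ring
    rw [this]
    exact mul_not_sq p hp h8 r hr hr2 m hm (-1) w hnu hw hnsn hsq


def Emap (p n i : ℕ) (c : ZMod (p ^ (n - i))) : ZMod (p ^ n) :=
  (p : ZMod (p ^ n)) ^ i * ((c.val : ℕ) : ZMod (p ^ n))

omit h8 in
lemma unit_iff_val (m : ℕ) (hm : 1 ≤ m) (c : ZMod (p ^ m)) : IsUnit c ↔ ¬ p ∣ c.val := by
  haveI : NeZero (p ^ m) := ⟨pow_ne_zero _ hp.pos.ne'⟩
  conv_lhs => rw [← ZMod.natCast_rightInverse c]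
  rw [ZMod.isUnit_iff_coprime, Nat.coprime_pow_right_iff hm, Nat.coprime_comm,
    Nat.Prime.coprime_iff_not_dvd hp]

omit h8 in
lemma val_Emap (n i : ℕ) (hi : i < n) (c : ZMod (p ^ (n - i))) :
    (Emap p n i c).val = p ^ i * c.val := by
  haveI : NeZero (p ^ n) := ⟨pow_ne_zero _ hp.pos.ne'⟩
  haveI : NeZero (p ^ (n - i)) := ⟨pow_ne_zero _ hp.pos.ne'⟩
  have hlt : p ^ i * c.val < p ^ n := by
    calc p ^ i * c.val < p ^ i * p ^ (n - i) :=
      mul_lt_mul_of_pos_left (ZMod.val_lt c) (Nat.pow_pos hp.pos)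
    _ = p ^ n := by rw [← pow_add]; congr 1; omega
  have : Emap p n i c = ((p ^ i * c.val : ℕ) : ZMod (p ^ n)) := by
    unfold Emap; push_cast; ring
  rw [this, ZMod.val_cast_of_lt hlt]

omit h8 in
lemma Emap_inj (n i : ℕ) (hi : i < n) (c d : ZMod (p ^ (n - i)))
    (h : Emap p n i c = Emap p n i d) : c = d := by
  haveI : NeZero (p ^ (n - i)) := ⟨pow_ne_zero _ hp.pos.ne'⟩
  have hv := congrArg ZMod.val h
  rw [val_Emap p hp n i hi, val_Emap p hp n i hi] at hv
  have : c.val = d.val := Nat.eq_of_mul_eq_mul_left (Nat.pow_pos hp.pos) hv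
  exact ZMod.val_injective _ this

omit h8 in
lemma Emap_zero (n i : ℕ) (hi : i < n) (c : ZMod (p ^ (n - i))) :
    Emap p n i c = 0 ↔ c = 0 := by
  haveI : NeZero (p ^ n) := ⟨pow_ne_zero _ hp.pos.ne'⟩
  haveI : NeZero (p ^ (n - i)) := ⟨pow_ne_zero _ hp.pos.ne'⟩
  rw [← ZMod.val_eq_zero, val_Emap p hp n i hi, ← ZMod.val_eq_zero]
  constructor
  · intro h
    rcases Nat.mul_eq_zero.mp h with h | h
    · exact absurd h (Nat.pow_pos hp.pos).ne'
    · exact h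
  · intro h; rw [h, mul_zero]

omit h8 in
lemma Emap_mod (n i : ℕ) (hi : i < n) (X : ℕ) :
    (p : ZMod (p ^ n)) ^ i * ((X % p ^ (n - i) : ℕ) : ZMod (p ^ n)) =
    (p : ZMod (p ^ n)) ^ i * ((X : ℕ) : ZMod (p ^ n)) := by
  have hz : (p : ZMod (p ^ n)) ^ i * (p : ZMod (p ^ n)) ^ (n - i) = 0 := by
    rw [← pow_add, show i + (n - i) = n by omega, ← Nat.cast_pow, ZMod.natCast_self]
  have hX : ((X : ℕ) : ZMod (p ^ n)) =
      ((p ^ (n - i) * (X / p ^ (n - i)) + X % p ^ (n - i) : ℕ) : ZMod (p ^ n)) := by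
    rw [Nat.div_add_mod]
  have key : (p : ZMod (p ^ n)) ^ i * ((X : ℕ) : ZMod (p ^ n)) =
      (p : ZMod (p ^ n)) ^ i * (p : ZMod (p ^ n)) ^ (n - i) * ((X / p ^ (n - i) : ℕ) : ZMod (p ^ n))
      + (p : ZMod (p ^ n)) ^ i * ((X % p ^ (n - i) : ℕ) : ZMod (p ^ n)) := by
    conv_lhs => rw [hX]
    push_cast
    ring
  rw [key, hz, zero_mul, zero_add]

omit h8 in
lemma Emap_add (n i : ℕ) (hi : i < n) (c d : ZMod (p ^ (n - i))) :
    Emap p n i (c + d) = Emap p n i c + Emap p n i d := by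
  haveI : NeZero (p ^ (n - i)) := ⟨pow_ne_zero _ hp.pos.ne'⟩
  unfold Emap
  rw [ZMod.val_add, Emap_mod p hp n i hi]
  push_cast
  ring

omit h8 in
lemma Emap_neg (n i : ℕ) (hi : i < n) (c : ZMod (p ^ (n - i))) :
    Emap p n i (-c) = - Emap p n i c := by
  have h := Emap_add p hp n i hi c (-c)
  rw [add_neg_cancel] at h
  have h0 : Emap p n i 0 = 0 := (Emap_zero p hp n i hi 0).mpr rfl
  rw [h0] at h
  exact eq_neg_of_add_eq_zero_left (by rw [add_comm]; exact h.symm)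


omit h8 in
lemma nat_level (i i' a b : ℕ) (ha : ¬ p ∣ a) (hb : ¬ p ∣ b)
    (h : p ^ i * a = p ^ i' * b) : i = i' ∧ a = b := by
  have key : ∀ j j' x y : ℕ, ¬ p ∣ x → ¬ p ∣ y → p ^ j * x = p ^ j' * y → j ≤ j' → j = j' := by
    intro j j' x y hx hy hxy hle
    by_contra hne
    have hlt : j < j' := lt_of_le_of_ne hle hne
    have : p ^ j * x = p ^ j * (p ^ (j' - j) * y) := by
      rw [hxy, ← mul_assoc, ← pow_add]
      congr 2
      omega
    have hx2 : x = p ^ (j' - j) * y := Nat.eq_of_mul_eq_mul_left (Nat.pow_pos hp.pos) this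
    apply hx
    rw [hx2]
    exact Dvd.dvd.mul_right (dvd_pow_self p (by omega : j' - j ≠ 0)) y
  have hii : i = i' := by
    rcases le_total i i' with hle | hle
    · exact key i i' a b ha hb h hle
    · exact (key i' i b a hb ha h.symm hle).symm
  subst hii
  exact ⟨rfl, Nat.eq_of_mul_eq_mul_left (Nat.pow_pos hp.pos) h⟩

omit h8 in
lemma Emap_level (n i i' : ℕ) (hi : i < n) (hi' : i' < n)
    (c : ZMod (p ^ (n - i))) (c' : ZMod (p ^ (n - i')))
    (hc : ¬ p ∣ c.val) (hc' : ¬ p ∣ c'.val)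
    (h : Emap p n i c = Emap p n i' c') : i = i' ∧ c.val = c'.val := by
  have hv := congrArg ZMod.val h
  rw [val_Emap p hp n i hi, val_Emap p hp n i' hi'] at hv
  exact nat_level p hp i i' c.val c'.val hc hc' hv

omit h8 in
lemma decomp (n : ℕ) (hn : 1 ≤ n) (a : ZMod (p ^ n)) (ha : a ≠ 0) :
    ∃ i, i < n ∧ ∃ c : ZMod (p ^ (n - i)), ¬ p ∣ c.val ∧ a = Emap p n i c := by
  haveI : NeZero (p ^ n) := ⟨pow_ne_zero _ hp.pos.ne'⟩
  set v := a.val with hv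
  have hv0 : v ≠ 0 := fun h => ha (by rwa [← ZMod.val_eq_zero])
  have hvlt : v < p ^ n := ZMod.val_lt a
  set i := v.factorization p with hi
  have hdvd : p ^ i ∣ v := Nat.ordProj_dvd v p
  have hndvd : ¬ p ∣ v / p ^ i := Nat.not_dvd_ordCompl hp hv0
  have hveq : p ^ i * (v / p ^ i) = v := Nat.ordProj_mul_ordCompl_eq_self v p
  have hilt : i < n := by
    by_contra hge
    have h1 : p ^ n ≤ p ^ i := Nat.pow_le_pow_right hp.pos (by omega)
    have h2 : p ^ i ≤ v := Nat.le_of_dvd (Nat.pos_of_ne_zero hv0) hdvd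
    omega
  set t := v / p ^ i with ht
  have htlt : t < p ^ (n - i) := by
    by_contra hge
    push_neg at hge
    have : p ^ i * p ^ (n - i) ≤ p ^ i * t := Nat.mul_le_mul_left _ hge
    rw [← pow_add, show i + (n - i) = n by omega] at this
    omega
  haveI : NeZero (p ^ (n - i)) := ⟨pow_ne_zero _ hp.pos.ne'⟩
  refine ⟨i, hilt, ((t : ℕ) : ZMod (p ^ (n - i))), ?_, ?_⟩
  · rwa [ZMod.val_cast_of_lt htlt]
  · have : a = ((v : ℕ) : ZMod (p ^ n)) := (ZMod.natCast_rightInverse a).symm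
    rw [this, ← hveq]
    unfold Emap
    rw [ZMod.val_cast_of_lt htlt]
    push_cast
    ring


lemma inv2_mul (m : ℕ) : (2 : ZMod (p ^ m))⁻¹ * 2 = 1 :=
  ZMod.inv_mul_of_unit _ (two_unit p hp h8 m)

lemma mul_inv2 (m : ℕ) : (2 : ZMod (p ^ m)) * (2 : ZMod (p ^ m))⁻¹ = 1 :=
  ZMod.mul_inv_of_unit _ (two_unit p hp h8 m)

lemma unit_inv2 (m : ℕ) : IsUnit ((2 : ZMod (p ^ m))⁻¹) :=
  IsUnit.of_mul_eq_one _ (inv2_mul p hp h8 m)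

lemma two_mul_inv2 (m : ℕ) (x : ZMod (p ^ m)) : 2 * ((2 : ZMod (p ^ m))⁻¹ * x) = x := by
  rw [← mul_assoc, mul_inv2 p hp h8 m, one_mul]

lemma idA (m : ℕ) (x : ZMod (p ^ m)) :
    x - (2 : ZMod (p ^ m))⁻¹ * x = (2 : ZMod (p ^ m))⁻¹ * x := by
  apply (two_unit p hp h8 m).mul_left_cancel
  rw [mul_sub, two_mul_inv2 p hp h8 m]
  ring

lemma y_ne_x (m : ℕ) (hm : 1 ≤ m) (x : ZMod (p ^ m)) (hx : IsUnit x) :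
    (2 : ZMod (p ^ m))⁻¹ * x ≠ x := by
  intro h
  have h2 := congrArg (fun t => (2 : ZMod (p ^ m)) * t) h
  simp only [two_mul_inv2 p hp h8 m] at h2
  have hx0 : x = 0 := by
    have h3 : x = 2 * x - x := by ring
    rw [← h2] at h3
    simpa using h3
  haveI : Fact (1 < p ^ m) := ⟨by
    calc 1 < p := hp.one_lt
    _ ≤ p ^ m := Nat.le_self_pow (by omega) p⟩
  rw [hx0] at hx
  exact (not_isUnit_zero hx)

lemma three_unit (hp3 : p ≠ 3) (m : ℕ) : IsUnit (3 : ZMod (p ^ m)) := by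
  have : ((3 : ℕ) : ZMod (p ^ m)) = (3 : ZMod (p ^ m)) := by norm_num
  rw [← this, ZMod.isUnit_iff_coprime]
  apply Nat.Coprime.pow_right
  rw [Nat.coprime_comm, Nat.coprime_primes hp Nat.prime_three] at *
  exact hp3

lemma sum_unit_factor (hp3 : p ≠ 3) (m : ℕ) : IsUnit (1 + (2 : ZMod (p ^ m))⁻¹) := by
  have h3 : (2 : ZMod (p ^ m)) * (1 + (2 : ZMod (p ^ m))⁻¹) = 3 := by
    rw [mul_add, mul_inv2 p hp h8 m]
    ring
  have := three_unit p hp h8 hp3 m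
  rw [← h3] at this
  exact (isUnit_of_mul_isUnit_right this)

omit hp h8 in
lemma sum_factor (m : ℕ) (x : ZMod (p ^ m)) :
    x + (2 : ZMod (p ^ m))⁻¹ * x = (1 + (2 : ZMod (p ^ m))⁻¹) * x := by ring

omit h8 in
lemma Emap_sub (n i : ℕ) (hi : i < n) (c d : ZMod (p ^ (n - i))) :
    Emap p n i (c - d) = Emap p n i c - Emap p n i d := by
  rw [sub_eq_add_neg, Emap_add p hp n i hi, Emap_neg p hp n i hi, sub_eq_add_neg]

omit hp h8 in
lemma sub_val_cast (N : ℕ) [NeZero N] (u v : ZMod N) (h : v.val ≤ u.val) :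
    u - v = ((u.val - v.val : ℕ) : ZMod N) := by
  rw [Nat.cast_sub h, ZMod.natCast_rightInverse u, ZMod.natCast_rightInverse v]


lemma val2 (m : ℕ) (hm : 1 ≤ m) : (2 : ZMod (p ^ m)).val = 2 := by
  haveI : NeZero (p ^ m) := ⟨pow_ne_zero _ hp.pos.ne'⟩
  have h2 : (2 : ℕ) < p ^ m := by
    have h3 : 3 ≤ p := by omega
    calc (2:ℕ) < 3 := by norm_num
    _ ≤ p := h3
    _ ≤ p ^ m := Nat.le_self_pow (by omega) p
  have : ((2 : ℕ) : ZMod (p ^ m)) = (2 : ZMod (p ^ m)) := by norm_num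
  rw [← this, ZMod.val_cast_of_lt h2]

lemma pair_diff (n i : ℕ) (hi : i < n) (x : ZMod (p ^ (n - i))) (hx : IsUnit x) :
    ∃ d : ℕ, 1 ≤ d ∧ 2 * d < p ^ n ∧
      (((Emap p n i x).val < (Emap p n i ((2 : ZMod (p ^ (n - i)))⁻¹ * x)).val ∧
        Emap p n i ((2 : ZMod (p ^ (n - i)))⁻¹ * x) - Emap p n i x = (d : ZMod (p ^ n))) ∨
       ((Emap p n i ((2 : ZMod (p ^ (n - i)))⁻¹ * x)).val < (Emap p n i x).val ∧
        Emap p n i x - Emap p n i ((2 : ZMod (p ^ (n - i)))⁻¹ * x) = (d : ZMod (p ^ n)))) := by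
  haveI : NeZero (p ^ n) := ⟨pow_ne_zero _ hp.pos.ne'⟩
  haveI : NeZero (p ^ (n - i)) := ⟨pow_ne_zero _ hp.pos.ne'⟩
  haveI : Fact (1 < p ^ (n - i)) := ⟨by
    calc 1 < p := hp.one_lt
    _ ≤ p ^ (n - i) := Nat.le_self_pow (by omega) p⟩
  have hm : 1 ≤ n - i := by omega
  set y := (2 : ZMod (p ^ (n - i)))⁻¹ * x with hy
  have huy : IsUnit y := (unit_inv2 p hp h8 (n - i)).mul hx
  set X := Emap p n i x with hX
  set Y := Emap p n i y with hY
  -- ZMod identity: X - Y = Y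
  have hXYzmod : X - Y = Y := by
    rw [hX, hY, ← Emap_sub p hp n i hi, hy, idA p hp h8 (n - i) x]
  -- value formulas
  have hXv : X.val = p ^ i * x.val := val_Emap p hp n i hi x
  have hYv : Y.val = p ^ i * y.val := val_Emap p hp n i hi y
  have hX1 : 1 ≤ X.val := by
    have hne : X ≠ 0 := by
      rw [hX, Ne, Emap_zero p hp n i hi]
      exact hx.ne_zero
    exact Nat.pos_of_ne_zero (fun h => hne ((ZMod.val_eq_zero X).mp h))
  have hY1 : 1 ≤ Y.val := by
    have hne : Y ≠ 0 := by
      rw [hY, Ne, Emap_zero p hp n i hi]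
      exact huy.ne_zero
    exact Nat.pos_of_ne_zero (fun h => hne ((ZMod.val_eq_zero Y).mp h))
  have hXlt : X.val < p ^ n := ZMod.val_lt X
  have hYlt : Y.val < p ^ n := ZMod.val_lt Y
  -- 2 * y.val ≡ x.val mod p^(n-i)
  have h2y : (2 * y).val = x.val := by rw [hy, two_mul_inv2 p hp h8 (n - i) x]
  have h2ymod : (2 * y.val) % p ^ (n - i) = x.val := by
    have hc : ((2 * y.val : ℕ) : ZMod (p ^ (n - i))) = 2 * y := by
      push_cast
      rw [ZMod.natCast_rightInverse y]
    calc (2 * y.val) % p ^ (n - i) = ((2 * y.val : ℕ) : ZMod (p ^ (n - i))).val :=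
      (ZMod.val_natCast _ _).symm
    _ = (2 * y).val := by rw [hc]
    _ = x.val := h2y
  have hdm := Nat.div_add_mod (2 * y.val) (p ^ (n - i))
  rw [h2ymod] at hdm
  set q := 2 * y.val / p ^ (n - i) with hq
  have hylt : y.val < p ^ (n - i) := ZMod.val_lt y
  have hq2 : q < 2 := by
    rcases Nat.lt_or_ge q 2 with h | h
    · exact h
    exfalso
    have h1 : p ^ (n - i) * 2 ≤ p ^ (n - i) * q := Nat.mul_le_mul_left _ h
    have hc : p ^ (n - i) * 2 < p ^ (n - i) * 2 := by
      calc p ^ (n - i) * 2 ≤ p ^ (n - i) * q := h1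
      _ ≤ p ^ (n - i) * q + x.val := Nat.le_add_right _ _
      _ = 2 * y.val := hdm
      _ < 2 * p ^ (n - i) := by omega
      _ = p ^ (n - i) * 2 := by ring
    exact absurd hc (lt_irrefl _)
  -- key linear relations between X.val and Y.val
  interval_cases q
  · -- q = 0 : 2 * y.val = x.val, so 2 * Y.val = X.val
    simp only [Nat.mul_zero, Nat.zero_add, mul_zero, zero_add] at hdm
    have e1 : 2 * Y.val = X.val := by
      rw [hXv, hYv, hdm]
      ring
    refine ⟨Y.val, hY1, by omega, Or.inr ⟨by omega, ?_⟩⟩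
    exact hXYzmod.trans (ZMod.natCast_rightInverse Y).symm
  · -- q = 1 : 2 * y.val = p^(n-i) + x.val, so 2 * Y.val = p^n + X.val
    have e2 : 2 * Y.val = p ^ n + X.val := by
      rw [hXv, hYv]
      calc 2 * (p ^ i * y.val) = p ^ i * (2 * y.val) := by ring
      _ = p ^ i * (p ^ (n - i) * 1 + x.val) := by rw [← hdm]
      _ = p ^ i * p ^ (n - i) + p ^ i * x.val := by ring
      _ = p ^ n + p ^ i * x.val := by
          rw [← pow_add, show i + (n - i) = n by omega]
    refine ⟨p ^ n - Y.val, by omega, by omega, Or.inl ⟨by omega, ?_⟩⟩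
    have hcast : ((Y.val : ℕ) : ZMod (p ^ n)) + ((p ^ n - Y.val : ℕ) : ZMod (p ^ n)) = 0 := by
      rw [← Nat.cast_add, show Y.val + (p ^ n - Y.val) = p ^ n by omega, ZMod.natCast_self]
    rw [ZMod.natCast_rightInverse Y] at hcast
    have hneg : ((p ^ n - Y.val : ℕ) : ZMod (p ^ n)) = -Y := eq_neg_of_add_eq_zero_left (by rw [add_comm]; exact hcast)
    rw [hneg]
    have h5 : Y - X = -(X - Y) := by ring
    rw [h5, hXYzmod]


end


/-- Corollary 3.2: for a prime `p ≡ 3 (mod 8)`, `p ≠ 3`, `n ≥ 1`, and a primitive root `r`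
mod `p` with `r^{p-1} ≢ 1 (mod p²)`, the union over `i = 0, …, n-1` of the sets
`p^i·Ŝ_{p^{n-i}} = {{p^i·x, p^i·(2⁻¹·x)} : x ∈ ⟨r²⟩_{p^{n-i}}}`, where `2⁻¹` is the
inverse of `2` modulo `p^{n-i}` and elements are represented by least positive residues,
is a strong Skolem starter for `ℤ_{p^n}`. -/
theorem strong_skolem_starter_prime_power_inv (p n : ℕ) (hp : p.Prime) (h8 : p % 8 = 3)
    (hp3 : p ≠ 3) (hn : 1 ≤ n) (r : ℤ)
    (hr : IsPrimitiveRoot (r : ZMod p) (p - 1))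
    (hr2 : (r : ZMod (p ^ 2)) ^ (p - 1) ≠ 1) :
    IsStrongSkolemStarter (p ^ n)
      {z | ∃ i < n, ∃ x : ZMod (p ^ (n - i)),
        (∃ j : ℕ, x = ((r : ZMod (p ^ (n - i))) ^ 2) ^ j) ∧
        z = s((p : ZMod (p ^ n)) ^ i * (x.val : ZMod (p ^ n)),
              (p : ZMod (p ^ n)) ^ i * ((((2 : ZMod (p ^ (n - i)))⁻¹ * x).val : ZMod (p ^ n))))} := by
  haveI : Fact p.Prime := ⟨hp⟩
  haveI : NeZero (p ^ n) := ⟨pow_ne_zero _ hp.pos.ne'⟩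
  set S : Set (Sym2 (ZMod (p ^ n))) :=
    {z | ∃ i < n, ∃ x : ZMod (p ^ (n - i)),
        (∃ j : ℕ, x = ((r : ZMod (p ^ (n - i))) ^ 2) ^ j) ∧
        z = s((p : ZMod (p ^ n)) ^ i * (x.val : ZMod (p ^ n)),
              (p : ZMod (p ^ n)) ^ i * ((((2 : ZMod (p ^ (n - i)))⁻¹ * x).val : ZMod (p ^ n))))}
    with hSdef
  have memS : ∀ z : Sym2 (ZMod (p ^ n)), z ∈ S ↔ ∃ i, i < n ∧ ∃ x : ZMod (p ^ (n - i)),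
      (∃ j : ℕ, x = ((r : ZMod (p ^ (n - i))) ^ 2) ^ j) ∧
      z = s(Emap p n i x, Emap p n i ((2 : ZMod (p ^ (n - i)))⁻¹ * x)) := fun z => Iff.rfl
  -- basic unit facts
  have hQRunit : ∀ i, i < n → ∀ x : ZMod (p ^ (n - i)),
      (∃ j : ℕ, x = ((r : ZMod (p ^ (n - i))) ^ 2) ^ j) → IsUnit x := by
    intro i hi x hx
    exact ((qr_iff p hp h8 r hr hr2 (n - i) (by omega) x).mp hx).1
  have hYunit : ∀ i, ∀ x : ZMod (p ^ (n - i)), IsUnit x →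
      IsUnit ((2 : ZMod (p ^ (n - i)))⁻¹ * x) := by
    intro i x hx
    exact (unit_inv2 p hp h8 (n - i)).mul hx
  have hUne : ∀ i, i < n → ∀ x : ZMod (p ^ (n - i)), IsUnit x → x ≠ 0 := by
    intro i hi x hx h0
    have hnd := (unit_iff_val p hp (n - i) (by omega) x).mp hx
    apply hnd
    rw [h0, ZMod.val_zero]
    exact dvd_zero p
  have hUval : ∀ i, i < n → ∀ x : ZMod (p ^ (n - i)), IsUnit x → ¬ p ∣ x.val := by
    intro i hi x hx
    exact (unit_iff_val p hp (n - i) (by omega) x).mp hx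
  have hinvtwo : ∀ i, ∀ c : ZMod (p ^ (n - i)), (2 : ZMod (p ^ (n - i)))⁻¹ * (2 * c) = c := by
    intro i c
    rw [← mul_assoc, inv2_mul p hp h8 (n - i), one_mul]
  -- 1. pairs are not diagonal
  have hnodiag : ∀ z ∈ S, ¬ z.IsDiag := by
    rintro z ⟨i, hi, x, hQR, rfl⟩ hdiag
    rw [Sym2.mk_isDiag_iff] at hdiag
    have hux := hQRunit i hi x hQR
    have h2 := Emap_inj p hp n i hi _ _ hdiag.symm
    exact y_ne_x p hp h8 (n - i) (by omega) x hux h2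
  -- 2. 0 is not an entry
  have hzero : ∀ z ∈ S, (0 : ZMod (p ^ n)) ∉ z := by
    rintro z ⟨i, hi, x, hQR, rfl⟩ hmem
    have hux := hQRunit i hi x hQR
    rw [Sym2.mem_iff] at hmem
    rcases hmem with h | h
    · exact hUne i hi x hux ((Emap_zero p hp n i hi x).mp h.symm)
    · exact hUne i hi _ (hYunit i x hux) ((Emap_zero p hp n i hi _).mp h.symm)
  -- 3. every nonzero element is in exactly one pair
  have hcover : ∀ a : ZMod (p ^ n), a ≠ 0 → ∃! z, z ∈ S ∧ a ∈ z := by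
    intro a ha
    obtain ⟨i, hi, c, hcp, rfl⟩ := decomp p hp n hn a ha
    have hcu : IsUnit c := (unit_iff_val p hp (n - i) (by omega) c).mpr hcp
    rcases qr_two_dichotomy p hp h8 r hr hr2 (n - i) (by omega) c hcu with ⟨hq1, hq2⟩ | ⟨hq1, hq2⟩
    · -- c is in the group: pair (i, c), entry x
      refine ⟨s(Emap p n i c, Emap p n i ((2 : ZMod (p ^ (n - i)))⁻¹ * c)),
        ⟨⟨i, hi, c, hq1, rfl⟩, Sym2.mem_iff.mpr (Or.inl rfl)⟩, ?_⟩
      rintro z' ⟨⟨i', hi', x', hQR', rfl⟩, hmem⟩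
      have hux' := hQRunit i' hi' x' hQR'
      rw [Sym2.mem_iff] at hmem
      rcases hmem with h | h
      · obtain ⟨hii, hvv⟩ := Emap_level p hp n i i' hi hi' c x' hcp (hUval i' hi' x' hux') h
        subst hii
        have : c = x' := ZMod.val_injective _ hvv
        subst this
        rfl
      · obtain ⟨hii, hvv⟩ := Emap_level p hp n i i' hi hi' c _ hcp
          (hUval i' hi' _ (hYunit i' x' hux')) h
        subst hii
        have hcx : c = (2 : ZMod (p ^ (n - i)))⁻¹ * x' := ZMod.val_injective _ hvv
        exfalso
        apply hq2
        have hx2c : x' = 2 * c := by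
          rw [hcx, ← mul_assoc, mul_inv2 p hp h8 (n - i), one_mul]
        rw [← hx2c]
        exact hQR'
    · -- 2c is in the group: pair (i, 2c), entry y
      refine ⟨s(Emap p n i (2 * c), Emap p n i ((2 : ZMod (p ^ (n - i)))⁻¹ * (2 * c))),
        ⟨⟨i, hi, 2 * c, hq2, rfl⟩, Sym2.mem_iff.mpr (Or.inr (congrArg (Emap p n i) (hinvtwo i c).symm))⟩, ?_⟩
      rintro z' ⟨⟨i', hi', x', hQR', rfl⟩, hmem⟩
      have hux' := hQRunit i' hi' x' hQR'
      rw [Sym2.mem_iff] at hmem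
      rcases hmem with h | h
      · obtain ⟨hii, hvv⟩ := Emap_level p hp n i i' hi hi' c x' hcp (hUval i' hi' x' hux') h
        subst hii
        have : c = x' := ZMod.val_injective _ hvv
        subst this
        exact absurd hQR' hq1
      · obtain ⟨hii, hvv⟩ := Emap_level p hp n i i' hi hi' c _ hcp
          (hUval i' hi' _ (hYunit i' x' hux')) h
        subst hii
        have hcx : c = (2 : ZMod (p ^ (n - i)))⁻¹ * x' := ZMod.val_injective _ hvv
        have hx2c : x' = 2 * c := by
          rw [hcx, ← mul_assoc, mul_inv2 p hp h8 (n - i), one_mul]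
        subst hx2c
        rfl
  -- 4. every nonzero difference from exactly one pair
  have hdiffs : ∀ a : ZMod (p ^ n), a ≠ 0 →
      ∃! z, z ∈ S ∧ ∃ x y : ZMod (p ^ n), z = s(x, y) ∧ x - y = a := by
    intro a ha
    obtain ⟨i, hi, c, hcp, rfl⟩ := decomp p hp n hn a ha
    have hcu : IsUnit c := (unit_iff_val p hp (n - i) (by omega) c).mpr hcp
    have h2cu : IsUnit (2 * c) := (two_unit p hp h8 (n - i)).mul hcu
    have hiA : ∀ i', i' < n → ∀ x' : ZMod (p ^ (n - i')),
        Emap p n i' x' - Emap p n i' ((2 : ZMod (p ^ (n - i')))⁻¹ * x')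
          = Emap p n i' ((2 : ZMod (p ^ (n - i')))⁻¹ * x') := by
      intro i' hi' x'
      rw [← Emap_sub p hp n i' hi', idA p hp h8 (n - i') x']
    rcases qr_neg_dichotomy p hp h8 r hr hr2 (n - i) (by omega) (2 * c) h2cu
      with ⟨hq1, hq2⟩ | ⟨hq1, hq2⟩
    · -- pair (i, 2c): X - Y = Emap i c
      refine ⟨s(Emap p n i (2 * c), Emap p n i ((2 : ZMod (p ^ (n - i)))⁻¹ * (2 * c))),
        ⟨⟨i, hi, 2 * c, hq1, rfl⟩, Emap p n i (2 * c),
          Emap p n i ((2 : ZMod (p ^ (n - i)))⁻¹ * (2 * c)), rfl, ?_⟩, ?_⟩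
      · rw [hiA i hi (2 * c), hinvtwo i c]
      · rintro z' ⟨⟨i', hi', x', hQR', rfl⟩, xx, yy, hzeq, hdf⟩
        have hux' := hQRunit i' hi' x' hQR'
        rcases Sym2.eq_iff.mp hzeq with ⟨h1, h2⟩ | ⟨h1, h2⟩
        · -- xx = X', yy = Y' : a = X' - Y' = Emap i' (2⁻¹ x')
          have h1E : Emap p n i' x' = xx := h1
          have h2E : Emap p n i' ((2 : ZMod (p ^ (n - i')))⁻¹ * x') = yy := h2
          rw [← h1E, ← h2E, hiA i' hi' x'] at hdf
          obtain ⟨hii, hvv⟩ := Emap_level p hp n i i' hi hi' c _ hcp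
            (hUval i' hi' _ (hYunit i' x' hux')) hdf.symm
          subst hii
          have hcx : c = (2 : ZMod (p ^ (n - i)))⁻¹ * x' := ZMod.val_injective _ hvv
          have hx2c : x' = 2 * c := by
            rw [hcx, ← mul_assoc, mul_inv2 p hp h8 (n - i), one_mul]
          subst hx2c
          rfl
        · -- xx = Y', yy = X' : a = Y' - X' = Emap i' (-(2⁻¹ x'))
          have h1E : Emap p n i' x' = yy := h1
          have h2E : Emap p n i' ((2 : ZMod (p ^ (n - i')))⁻¹ * x') = xx := h2
          rw [← h1E, ← h2E] at hdf
          have hdf2 : Emap p n i' (-((2 : ZMod (p ^ (n - i')))⁻¹ * x')) = Emap p n i c := by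
            rw [Emap_neg p hp n i' hi', ← hiA i' hi' x']
            linear_combination hdf
          obtain ⟨hii, hvv⟩ := Emap_level p hp n i i' hi hi' c _ hcp
            (hUval i' hi' _ ((hYunit i' x' hux').neg)) hdf2.symm
          subst hii
          have hcx : c = -((2 : ZMod (p ^ (n - i)))⁻¹ * x') := ZMod.val_injective _ hvv
          exfalso
          apply hq2
          have hx2c : x' = -(2 * c) := by
            rw [hcx]
            rw [mul_neg, neg_neg, ← mul_assoc, mul_inv2 p hp h8 (n - i), one_mul]
          rw [← hx2c]
          exact hQR'
    · -- pair (i, -(2c)): Y - X = Emap i c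
      have hinvneg : (2 : ZMod (p ^ (n - i)))⁻¹ * (-(2 * c)) = -c := by
        rw [mul_neg, hinvtwo i c]
      refine ⟨s(Emap p n i (-(2 * c)), Emap p n i ((2 : ZMod (p ^ (n - i)))⁻¹ * (-(2 * c)))),
        ⟨⟨i, hi, -(2 * c), hq2, rfl⟩, Emap p n i ((2 : ZMod (p ^ (n - i)))⁻¹ * (-(2 * c))),
          Emap p n i (-(2 * c)), Sym2.eq_swap.symm, ?_⟩, ?_⟩
      · rw [hinvneg, ← Emap_sub p hp n i hi]
        congr 1
        ring
      · rintro z' ⟨⟨i', hi', x', hQR', rfl⟩, xx, yy, hzeq, hdf⟩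
        have hux' := hQRunit i' hi' x' hQR'
        rcases Sym2.eq_iff.mp hzeq with ⟨h1, h2⟩ | ⟨h1, h2⟩
        · have h1E : Emap p n i' x' = xx := h1
          have h2E : Emap p n i' ((2 : ZMod (p ^ (n - i')))⁻¹ * x') = yy := h2
          rw [← h1E, ← h2E, hiA i' hi' x'] at hdf
          obtain ⟨hii, hvv⟩ := Emap_level p hp n i i' hi hi' c _ hcp
            (hUval i' hi' _ (hYunit i' x' hux')) hdf.symm
          subst hii
          have hcx : c = (2 : ZMod (p ^ (n - i)))⁻¹ * x' := ZMod.val_injective _ hvv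
          exfalso
          apply hq1
          have hx2c : x' = 2 * c := by
            rw [hcx, ← mul_assoc, mul_inv2 p hp h8 (n - i), one_mul]
          rw [← hx2c]
          exact hQR'
        · have h1E : Emap p n i' x' = yy := h1
          have h2E : Emap p n i' ((2 : ZMod (p ^ (n - i')))⁻¹ * x') = xx := h2
          rw [← h1E, ← h2E] at hdf
          have hdf2 : Emap p n i' (-((2 : ZMod (p ^ (n - i')))⁻¹ * x')) = Emap p n i c := by
            rw [Emap_neg p hp n i' hi', ← hiA i' hi' x']
            linear_combination hdf
          obtain ⟨hii, hvv⟩ := Emap_level p hp n i i' hi hi' c _ hcp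
            (hUval i' hi' _ ((hYunit i' x' hux').neg)) hdf2.symm
          subst hii
          have hcx : c = -((2 : ZMod (p ^ (n - i)))⁻¹ * x') := ZMod.val_injective _ hvv
          have hx2c : x' = -(2 * c) := by
            rw [hcx]
            rw [mul_neg, neg_neg, ← mul_assoc, mul_inv2 p hp h8 (n - i), one_mul]
          subst hx2c
          rfl
  have hstarter : IsStarter (p ^ n) S := ⟨hnodiag, hzero, hcover, hdiffs⟩
  -- sums
  have hsum : ∀ i, i < n → ∀ x : ZMod (p ^ (n - i)),
      pairSum (s(Emap p n i x, Emap p n i ((2 : ZMod (p ^ (n - i)))⁻¹ * x)))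
        = Emap p n i ((1 + (2 : ZMod (p ^ (n - i)))⁻¹) * x) := by
    intro i hi x
    have : pairSum (s(Emap p n i x, Emap p n i ((2 : ZMod (p ^ (n - i)))⁻¹ * x)))
        = Emap p n i x + Emap p n i ((2 : ZMod (p ^ (n - i)))⁻¹ * x) := rfl
    rw [this, ← Emap_add p hp n i hi, sum_factor p (n - i) x]
  have hsumunit : ∀ i, i < n → ∀ x : ZMod (p ^ (n - i)), IsUnit x →
      IsUnit ((1 + (2 : ZMod (p ^ (n - i)))⁻¹) * x) := by
    intro i hi x hx
    exact (sum_unit_factor p hp h8 hp3 (n - i)).mul hx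
  have hstrong : IsStrongStarter (p ^ n) S := by
    refine ⟨hstarter, ?_, ?_⟩
    · rintro z ⟨i, hi, x, hQR, rfl⟩ hps
      have hux := hQRunit i hi x hQR
      have hps' : Emap p n i ((1 + (2 : ZMod (p ^ (n - i)))⁻¹) * x) = 0 := by
        rw [← hsum i hi x]
        exact hps
      exact hUne i hi _ (hsumunit i hi x hux) ((Emap_zero p hp n i hi _).mp hps')
    · rintro z ⟨i, hi, x, hQR, rfl⟩ w ⟨i', hi', x', hQR', rfl⟩ hps
      have hux := hQRunit i hi x hQR
      have hux' := hQRunit i' hi' x' hQR'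
      have hps' : Emap p n i ((1 + (2 : ZMod (p ^ (n - i)))⁻¹) * x)
          = Emap p n i' ((1 + (2 : ZMod (p ^ (n - i')))⁻¹) * x') := by
        rw [← hsum i hi x, ← hsum i' hi' x']
        exact hps
      obtain ⟨hii, hvv⟩ := Emap_level p hp n i i' hi hi' _ _
        (hUval i hi _ (hsumunit i hi x hux)) (hUval i' hi' _ (hsumunit i' hi' x' hux')) hps' 
      subst hii
      have heq : (1 + (2 : ZMod (p ^ (n - i)))⁻¹) * x = (1 + (2 : ZMod (p ^ (n - i)))⁻¹) * x' :=
        ZMod.val_injective _ hvv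
      have hxx : x = x' := (sum_unit_factor p hp h8 hp3 (n - i)).mul_left_cancel heq
      subst hxx
      rfl
  -- Skolem property
  have hskolem : ∀ k : ℕ, 1 ≤ k → k ≤ (p ^ n - 1) / 2 →
      ∃ z ∈ S, ∃ x y : ZMod (p ^ n), z = s(x, y) ∧ x.val < y.val ∧ y - x = (k : ZMod (p ^ n)) := by
    intro k hk1 hk2
    have hN3 : 3 ≤ p ^ n := by
      have : p ≤ p ^ n := Nat.le_self_pow (by omega) p
      omega
    have hklt : k < p ^ n := by omega
    have ha : (k : ZMod (p ^ n)) ≠ 0 := by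
      intro h
      have := congrArg ZMod.val h
      rw [ZMod.val_cast_of_lt hklt, ZMod.val_zero] at this
      omega
    obtain ⟨z, ⟨hzS, xx, yy, hzeq, hdf⟩, -⟩ := hdiffs (k : ZMod (p ^ n)) ha
    obtain ⟨i, hi, x, hQR, rfl⟩ := hzS
    have hux := hQRunit i hi x hQR
    obtain ⟨d, hd1, hd2, hcases⟩ := pair_diff p hp h8 n i hi x hux
    have hdK : d ≤ (p ^ n - 1) / 2 := by omega
    have hdne : ¬ ((d : ZMod (p ^ n)) = -(k : ZMod (p ^ n))) := by
      intro h
      have hsum0 : ((d + k : ℕ) : ZMod (p ^ n)) = 0 := by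
        push_cast
        rw [h]
        ring
      have hdvd := (ZMod.natCast_eq_zero_iff _ _).mp hsum0
      have := Nat.le_of_dvd (by omega) hdvd
      omega
    have hdk : (d : ZMod (p ^ n)) = (k : ZMod (p ^ n)) → d = k := by
      intro h
      have := congrArg ZMod.val h
      rwa [ZMod.val_cast_of_lt (by omega : d < p ^ n), ZMod.val_cast_of_lt hklt] at this
    -- the signed difference of the pair is ±k
    have hpm : Emap p n i x - Emap p n i ((2 : ZMod (p ^ (n - i)))⁻¹ * x) = (k : ZMod (p ^ n))
        ∨ Emap p n i ((2 : ZMod (p ^ (n - i)))⁻¹ * x) - Emap p n i x = (k : ZMod (p ^ n)) := by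
      rcases Sym2.eq_iff.mp hzeq with ⟨h1, h2⟩ | ⟨h1, h2⟩
      · have h1E : Emap p n i x = xx := h1
        have h2E : Emap p n i ((2 : ZMod (p ^ (n - i)))⁻¹ * x) = yy := h2
        left; rw [h1E, h2E]; exact hdf
      · have h1E : Emap p n i x = yy := h1
        have h2E : Emap p n i ((2 : ZMod (p ^ (n - i)))⁻¹ * x) = xx := h2
        right; rw [h1E, h2E]; exact hdf
    rcases hcases with ⟨hlt, hdeq⟩ | ⟨hlt, hdeq⟩
    · -- X.val < Y.val, Y - X = d
      refine ⟨s(Emap p n i x, Emap p n i ((2 : ZMod (p ^ (n - i)))⁻¹ * x)),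
        ⟨i, hi, x, hQR, rfl⟩, Emap p n i x, Emap p n i ((2 : ZMod (p ^ (n - i)))⁻¹ * x),
        rfl, hlt, ?_⟩
      rcases hpm with h | h
      · exfalso
        apply hdne
        linear_combination -hdeq - h
      · exact h
    · -- Y.val < X.val, X - Y = d
      refine ⟨s(Emap p n i x, Emap p n i ((2 : ZMod (p ^ (n - i)))⁻¹ * x)),
        ⟨i, hi, x, hQR, rfl⟩, Emap p n i ((2 : ZMod (p ^ (n - i)))⁻¹ * x), Emap p n i x,
        Sym2.eq_swap.symm, hlt, ?_⟩
      rcases hpm with h | h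
      · exact h
      · exfalso
        apply hdne
        linear_combination -hdeq - h
  exact ⟨hstrong, hstarter, hskolem⟩
end

section
/- Let p = 2^k·t + 1 be an odd prime with k ≥ 3 an integer and t an odd integer greater than 1, let r be a primitive root modulo p with r^{p−1} ≢ 1 (mod p²), and suppose 2 ∈ C_{2^{k−1}}^p. Let n be an integer greater than 1, and for i = 0,…,n−1 let p^i·T_{p^{n−i}} = {{p^i·x mod p^n, 2·p^i·x mod p^n} : x ∈ r^j·⟨r^{2^k}⟩_{p^{n−i}}, j = 0,…,2^{k−1}−1}, where elements of the cosets r^j·⟨r^{2^k}⟩_{p^{n−i}} in the unit group G_{p^{n−i}} are represented by their least positive residues. Then T = ⋃_{i=0}^{n−1} p^i·T_{p^{n−i}} is a strong Skolem starter for ℤ_{p^n}. -/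
/-- The cyclotomic class `C_j = r^j · ⟨r^Δ⟩` inside `ℤ_m`, as a set of residues. -/
def cycClass (m : ℕ) (r : ℤ) (Δ j : ℕ) : Set (ZMod m) :=
  {y | ∃ e : ℕ, y = (r : ZMod m) ^ j * ((r : ZMod m) ^ Δ) ^ e}


lemma halfexp {k A c : ℕ} (hk : 1 ≤ k) (hA : Odd A) (h1 : 2^k * A ∣ 2 * c)
    (h2 : ¬ (2^k * A ∣ c)) : c % 2^k = 2^(k-1) := by
  have h2k : 2^k = 2 * 2^(k-1) := by
    rw [← pow_succ']; congr 1; omega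
  obtain ⟨w, hw⟩ := h1
  have hc : c = 2^(k-1) * (A * w) := by
    have : 2 * c = 2 * (2^(k-1) * (A * w)) := by rw [hw, h2k]; ring
    omega
  have hodd : Odd (A * w) := by
    rcases Nat.even_or_odd w with hw2 | hw2
    · exfalso
      obtain ⟨w', rfl⟩ := hw2
      exact h2 ⟨w', by rw [hc, h2k]; ring⟩
    · exact hA.mul hw2
  obtain ⟨q, hq⟩ := hodd
  have hc2 : c = 2^(k-1) + 2^k * q := by rw [hc, hq, h2k]; ring
  have hlt : 2^(k-1) < 2^k := by
    have : 0 < 2^(k-1) := Nat.pow_pos (by norm_num)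
    omega
  rw [hc2, Nat.add_mul_mod_self_left, Nat.mod_eq_of_lt hlt]

lemma modflip {k c0 a : ℕ} (hk : 1 ≤ k) (hc0 : c0 % 2^k = 2^(k-1)) :
    ((c0 + a) % 2^k < 2^(k-1) ↔ ¬ (a % 2^k < 2^(k-1))) := by
  have h2k : 2^k = 2 * 2^(k-1) := by rw [← pow_succ']; congr 1; omega
  set H := 2^(k-1) with hH
  have hHpos : 0 < H := Nat.pow_pos (by norm_num)
  have halt : a % 2^k < 2^k := Nat.mod_lt _ (by positivity)
  rw [Nat.add_mod, hc0]
  rcases lt_or_ge (a % 2^k) H with h | h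
  · have : (H + a % 2^k) % 2^k = H + a % 2^k := Nat.mod_eq_of_lt (by omega)
    omega
  · have heq : H + a % 2^k = (a % 2^k - H) + 1 * 2^k := by omega
    rw [heq, Nat.add_mul_mod_self_right]
    have : a % 2^k - H < H := by omega
    rw [Nat.mod_eq_of_lt (by omega)]
    omega

lemma aux_order_dvd {p : ℕ} (hp : p.Prime) (hodd : Odd p) {r : ℤ}
    (hpr : ¬ (p:ℤ) ∣ r)
    (h1 : (p:ℤ) ∣ r ^ (p - 1) - 1)
    (h2 : ¬ ((p:ℤ)^2 ∣ r ^ (p - 1) - 1))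
    (hord : ∀ M : ℕ, (p:ℤ) ∣ r ^ M - 1 → (p - 1) ∣ M)
    {s M : ℕ} (hs : 1 ≤ s) (hdvd : (p:ℤ)^s ∣ r ^ M - 1) :
    p ^ (s - 1) * (p - 1) ∣ M := by
  have hpM : (p:ℤ) ∣ r ^ M - 1 := (dvd_pow_self (p:ℤ) (by omega)).trans hdvd
  obtain ⟨M', rfl⟩ := hord M hpM
  rcases Nat.eq_zero_or_pos M' with rfl | hM'
  · simp
  have hA : ¬ (p:ℤ) ∣ r ^ (p-1) := fun h => hpr ((Nat.prime_iff_prime_int.mp hp).dvd_of_dvd_pow h)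
  have hlte := Int.emultiplicity_pow_sub_pow hp hodd (x := r^(p-1)) (y := 1)
    (by simpa using h1) hA M'
  rw [one_pow, ← pow_mul] at hlte
  have hm1 : emultiplicity ((p:ℤ)) (r^(p-1) - 1) = 1 := by
    exact emultiplicity_eq_of_dvd_of_not_dvd (a := (p:ℤ)) (b := r^(p-1)-1)
      (by rw [pow_one]; exact h1) (by exact h2)
  have hfin : FiniteMultiplicity p M' := Nat.finiteMultiplicity_iff.mpr ⟨hp.ne_one, hM'⟩
  have hle : ((s:ℕ) : ℕ∞) ≤ emultiplicity ((p:ℤ)) (r^((p-1)*M') - 1) :=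
    le_emultiplicity_of_pow_dvd hdvd
  rw [hlte, hm1, hfin.emultiplicity_eq_multiplicity] at hle
  have hle' : s ≤ 1 + multiplicity p M' := by exact_mod_cast hle
  have hdvd' : p ^ (s-1) ∣ M' := by
    apply pow_dvd_of_le_emultiplicity
    rw [hfin.emultiplicity_eq_multiplicity]
    exact_mod_cast (by omega : s - 1 ≤ multiplicity p M')
  rw [mul_comm]
  exact mul_dvd_mul_left _ hdvd'

lemma castdown {p n i : ℕ} (hin : i ≤ n) (a : ℕ) :
    (p:ZMod (p^n))^i * ((a : ZMod (p^(n-i))).val : ZMod (p^n)) = ((p^i * a : ℕ) : ZMod (p^n)) := by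
  rw [ZMod.val_natCast]
  have h : p^i * (a % p^(n-i)) ≡ p^i * a [MOD p^n] := by
    have h0 : a % p^(n-i) ≡ a [MOD p^(n-i)] := Nat.mod_modEq a _
    have h1 := Nat.ModEq.mul_left' (c := p^i) h0
    rwa [← pow_add, Nat.add_sub_cancel' hin] at h1
  calc ((p:ZMod (p^n))^i * ((a % p^(n-i) : ℕ) : ZMod (p^n)))
      = ((p^i * (a % p^(n-i)) : ℕ) : ZMod (p^n)) := by push_cast; ring
    _ = ((p^i * a : ℕ) : ZMod (p^n)) := (ZMod.natCast_eq_natCast_iff _ _ _).mpr h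

def RRset (m : ℕ) (r : ℤ) (k : ℕ) : Set (ZMod m) :=
  {x | ∃ j < 2^(k-1), x ∈ cycClass m r (2^k) j}

lemma levelFacts {p k t : ℕ} {r : ℤ} (hk : 3 ≤ k) (ht : Odd t) (ht1 : 1 < t)
    (hp : p.Prime) (hpeq : p = 2 ^ k * t + 1)
    (hr : IsPrimitiveRoot (r : ZMod p) (p - 1))
    (hr2 : (r : ZMod (p ^ 2)) ^ (p - 1) ≠ 1)
    (h2 : (2 : ZMod p) ∈ cycClass p r (2 ^ k) (2 ^ (k - 1)))
    (s : ℕ) (hs : 1 ≤ s) :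
    (∀ x ∈ RRset (p^s) r k, IsUnit x) ∧
    (IsUnit (2 : ZMod (p^s))) ∧
    (∀ x : ZMod (p^s), IsUnit x → (x ∈ RRset (p^s) r k ↔ ¬ (2 * x ∈ RRset (p^s) r k))) ∧
    (∀ x : ZMod (p^s), IsUnit x → (x ∈ RRset (p^s) r k ↔ ¬ (-x ∈ RRset (p^s) r k))) := by
  -- basic numerology
  have h2k8 : 8 ≤ 2^k := by calc (8:ℕ) = 2^3 := by norm_num
                                _ ≤ 2^k := Nat.pow_le_pow_right (by norm_num) hk
  have ht3 : 3 ≤ t := by rcases ht with ⟨j, hj⟩; omega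
  have hplarge : 25 ≤ p := by
    have : 8 * 3 ≤ 2^k * t := Nat.mul_le_mul h2k8 ht3
    omega
  have hpodd : Odd p := hp.odd_of_ne_two (by omega)
  have hp1 : p - 1 = 2^k * t := by omega
  have h2kdvd : 2^k ∣ p - 1 := hp1 ▸ Dvd.intro t rfl
  haveI : Fact p.Prime := ⟨hp⟩
  haveI : NeZero (p^s) := ⟨pow_ne_zero _ hp.ne_zero⟩
  have hpslarge : 25 ≤ p^s := le_trans hplarge (Nat.le_self_pow (by omega) p)
  -- facts mod p
  have hrunit_p : IsUnit (r : ZMod p) := hr.isUnit (by omega)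
  have hpr : ¬ (p:ℤ) ∣ r := by
    intro h
    have h0 : (r : ZMod p) = 0 := (ZMod.intCast_zmod_eq_zero_iff_dvd r p).mpr h
    rw [h0] at hrunit_p
    exact not_isUnit_zero hrunit_p
  have h1 : (p:ℤ) ∣ r^(p-1) - 1 := by
    apply (ZMod.intCast_zmod_eq_zero_iff_dvd _ p).mp
    push_cast
    rw [hr.pow_eq_one]
    ring
  have h2' : ¬ ((p:ℤ)^2 ∣ r^(p-1) - 1) := by
    intro h
    apply hr2
    have h0 : ((r^(p-1) - 1 : ℤ) : ZMod (p^2)) = 0 := by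
      apply (ZMod.intCast_zmod_eq_zero_iff_dvd _ (p^2)).mpr
      push_cast
      exact h
    push_cast at h0
    linear_combination h0
  have hord : ∀ M : ℕ, (p:ℤ) ∣ r ^ M - 1 → (p - 1) ∣ M := by
    intro M h
    have h0 : ((r^M - 1 : ℤ) : ZMod p) = 0 := (ZMod.intCast_zmod_eq_zero_iff_dvd _ p).mpr h
    push_cast at h0
    have h1 : (r : ZMod p)^M = 1 := by linear_combination h0
    have := orderOf_dvd_of_pow_eq_one h1
    rwa [← hr.eq_orderOf] at this
  -- r is a unit mod p^s
  have hrunit : IsUnit (r : ZMod (p^s)) := by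
    have hcop : IsCoprime ((p:ℤ)^s) r :=
      IsCoprime.pow_left (((Nat.prime_iff_prime_int.mp hp).coprime_iff_not_dvd).mpr hpr)
    have hmap := hcop.map (Int.castRingHom (ZMod (p^s)))
    simp only [map_pow, map_intCast, map_natCast] at hmap
    have hps : ((p : ZMod (p^s)))^s = 0 := by
      have h5 : ((p^s : ℕ) : ZMod (p^s)) = 0 := ZMod.natCast_self _
      push_cast at h5
      exact h5
    rw [hps] at hmap
    simpa using isCoprime_zero_left.mp hmap
  set g : (ZMod (p^s))ˣ := hrunit.unit with hg
  have hgcoe : (g : ZMod (p^s)) = (r : ZMod (p^s)) := hrunit.unit_spec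
  have hcard : Fintype.card (ZMod (p^s))ˣ = p^(s-1)*(p-1) := by
    rw [ZMod.card_units_eq_totient, Nat.totient_prime_pow hp (by omega)]
  have horder : orderOf g = p^(s-1)*(p-1) := by
    apply Nat.dvd_antisymm
    · rw [← hcard]; exact orderOf_dvd_card
    · apply aux_order_dvd hp hpodd hpr h1 h2' hord hs
      have h0 : (r : ZMod (p^s)) ^ orderOf g = 1 := by
        rw [← hgcoe, ← Units.val_pow_eq_pow_val, pow_orderOf_eq_one, Units.val_one]
      have h3 : ((r^(orderOf g) - 1 : ℤ) : ZMod (p^s)) = 0 := by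
        push_cast
        rw [h0]
        ring
      have h4 := (ZMod.intCast_zmod_eq_zero_iff_dvd _ (p^s)).mp h3
      push_cast at h4
      exact h4
  have hsur : ∀ x : (ZMod (p^s))ˣ, ∃ a : ℕ, g ^ a = x := by
    intro x
    have htop : Subgroup.zpowers g = ⊤ := by
      apply Subgroup.eq_top_of_card_eq
      rw [Nat.card_zpowers, horder, Nat.card_eq_fintype_card, hcard]
    have hx : x ∈ Submonoid.powers g :=
      mem_powers_iff_mem_zpowers.mpr (htop ▸ Subgroup.mem_top x)
    obtain ⟨a, ha⟩ := hx
    exact ⟨a, ha⟩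
  have h2kφ : (2^k : ℕ) ∣ p^(s-1)*(p-1) := Dvd.dvd.mul_left h2kdvd _
  have h2klt : 2^(k-1) < 2^k := by
    have h0 : 0 < 2^(k-1) := Nat.pow_pos (by norm_num)
    have : 2^k = 2 * 2^(k-1) := by rw [← pow_succ']; congr 1; omega
    omega
  have hgpow : ∀ a : ℕ, ((g^a : (ZMod (p^s))ˣ) : ZMod (p^s)) = (r : ZMod (p^s))^a := by
    intro a
    rw [← hgcoe, Units.val_pow_eq_pow_val]
  have memC : ∀ a j : ℕ, j < 2^k →
      (((g^a : (ZMod (p^s))ˣ) : ZMod (p^s)) ∈ cycClass (p^s) r (2^k) j ↔ a % 2^k = j) := by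
    intro a j hj
    constructor
    · rintro ⟨e, he⟩
      rw [hgpow] at he
      have he2 : (r : ZMod (p^s))^a = (r : ZMod (p^s))^(j + 2^k*e) := by
        rw [he, pow_add, pow_mul]
      have hgg : g ^ a = g ^ (j + 2^k*e) := by
        apply Units.ext
        rw [hgpow, hgpow]
        exact he2
      have hmod := (pow_eq_pow_iff_modEq).mp hgg
      rw [horder] at hmod
      have hmod2 := Nat.ModEq.of_dvd h2kφ hmod
      have : a % 2^k = (j + 2^k*e) % 2^k := hmod2
      rw [Nat.add_mul_mod_self_left, Nat.mod_eq_of_lt hj] at this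
      exact this
    · intro ha
      refine ⟨a / 2^k, ?_⟩
      have hdm : 2^k * (a / 2^k) + j = a := by
        conv_rhs => rw [← Nat.div_add_mod a (2^k)]
        rw [ha]
      rw [hgpow, ← pow_mul, ← pow_add]
      rw [show j + 2^k * (a / 2^k) = a by omega]
  have memR : ∀ a : ℕ,
      (((g^a : (ZMod (p^s))ˣ) : ZMod (p^s)) ∈ RRset (p^s) r k ↔ a % 2^k < 2^(k-1)) := by
    intro a
    constructor
    · rintro ⟨j, hj, hmem⟩
      have := (memC a j (lt_trans hj h2klt)).mp hmem
      omega
    · intro h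
      exact ⟨a % 2^k, h, (memC a _ (Nat.mod_lt _ (by positivity))).mpr rfl⟩
  -- 2 is a unit
  have hu2 : IsUnit (2 : ZMod (p^s)) := by
    have hc22 : Nat.Coprime 2 (p^s) := Nat.Coprime.pow_right _ 
      (Nat.coprime_two_left.mpr hpodd)
    have := (ZMod.isUnit_iff_coprime 2 (p^s)).mpr hc22
    simpa using this
  obtain ⟨c, hc⟩ := hsur hu2.unit
  have hcmod : c % 2^k = 2^(k-1) := by
    have hπr : (ZMod.castHom (dvd_pow_self p (by omega : s ≠ 0)) (ZMod p)) (r : ZMod (p^s)) 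
        = (r : ZMod p) := map_intCast _ r
    have h2p : (r : ZMod p)^c = 2 := by
      have hval : ((g^c : (ZMod (p^s))ˣ) : ZMod (p^s)) = 2 := by rw [hc]; exact hu2.unit_spec
      rw [hgpow] at hval
      have := congrArg (ZMod.castHom (dvd_pow_self p (by omega : s ≠ 0)) (ZMod p)) hval
      rw [map_pow, hπr, map_ofNat] at this
      exact this
    obtain ⟨e, he⟩ := h2
    set g1 : (ZMod p)ˣ := hrunit_p.unit with hg1
    have hg1coe : (g1 : ZMod p) = (r : ZMod p) := hrunit_p.unit_spec
    have hordg1 : orderOf g1 = p - 1 := by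
      rw [← orderOf_units, hg1coe, ← hr.eq_orderOf]
    have hgg : g1 ^ c = g1 ^ (2^(k-1) + 2^k * e) := by
      apply Units.ext
      rw [Units.val_pow_eq_pow_val, Units.val_pow_eq_pow_val, hg1coe, h2p, pow_add, pow_mul]
      exact he
    have hmod := (pow_eq_pow_iff_modEq).mp hgg
    rw [hordg1] at hmod
    have hmod2 : c % 2^k = (2^(k-1) + 2^k*e) % 2^k := Nat.ModEq.of_dvd h2kdvd hmod
    rwa [Nat.add_mul_mod_self_left, Nat.mod_eq_of_lt h2klt] at hmod2
  obtain ⟨c', hc'⟩ := hsur (-1)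
  have hcmod' : c' % 2^k = 2^(k-1) := by
    have hpow2 : g ^ (c' * 2) = 1 := by
      rw [pow_mul, hc']
      norm_num
    have hφdvd : 2^k * (t * p^(s-1)) ∣ 2 * c' := by
      have := orderOf_dvd_of_pow_eq_one hpow2
      rw [horder] at this
      calc 2^k * (t * p^(s-1)) = p^(s-1) * (p-1) := by rw [hp1]; ring
        _ ∣ c' * 2 := this
        _ = 2 * c' := by ring
    have hnd : ¬ (2^k * (t * p^(s-1)) ∣ c') := by
      intro hdd
      have hdd2 : p^(s-1)*(p-1) ∣ c' := by
        calc p^(s-1)*(p-1) = 2^k * (t * p^(s-1)) := by rw [hp1]; ring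
          _ ∣ c' := hdd
      have : g ^ c' = 1 := orderOf_dvd_iff_pow_eq_one.mp (horder ▸ hdd2)
      rw [hc'] at this
      have hval := congrArg (Units.val) this
      rw [Units.val_neg, Units.val_one] at hval
      haveI : Fact (2 < p^s) := ⟨by omega⟩
      exact ZMod.neg_one_ne_one hval
    have hoddA : Odd (t * p^(s-1)) := ht.mul (hpodd.pow)
    exact halfexp (by omega) hoddA hφdvd hnd
  -- flips
  have flipG : ∀ (x : (ZMod (p^s))ˣ) (c0 : ℕ), c0 % 2^k = 2^(k-1) →
      (((g^c0 * x : (ZMod (p^s))ˣ) : ZMod (p^s)) ∈ RRset (p^s) r k ↔ 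
        ¬ ((x : ZMod (p^s)) ∈ RRset (p^s) r k)) := by
    intro x c0 hc0
    obtain ⟨a, rfl⟩ := hsur x
    rw [← pow_add, memR, memR]
    exact modflip (by omega) hc0
  refine ⟨?_, hu2, ?_, ?_⟩
  · rintro x ⟨j, hj, e, he⟩
    rw [he]
    exact (hrunit.pow _).mul ((hrunit.pow _).pow _)
  · intro x hx
    have h2x : (2 : ZMod (p^s)) * x = ((g^c * hx.unit : (ZMod (p^s))ˣ) : ZMod (p^s)) := by
      rw [Units.val_mul, hc, hu2.unit_spec, hx.unit_spec]
    have := flipG hx.unit c hcmod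
    rw [hx.unit_spec] at this
    rw [← h2x] at this
    tauto
  · intro x hx
    have hnx : -x = ((g^c' * hx.unit : (ZMod (p^s))ˣ) : ZMod (p^s)) := by
      rw [Units.val_mul, hc', Units.val_neg, Units.val_one, hx.unit_spec]
      ring
    have := flipG hx.unit c' hcmod'
    rw [hx.unit_spec] at this
    rw [← hnx] at this
    tauto


lemma liftval {p n : ℕ} (hp : 1 < p) {i : ℕ} (hin : i < n) (x : ZMod (p^(n-i))) :
    ((p:ZMod (p^n))^i * (x.val : ZMod (p^n))).val = p^i * x.val := by
  haveI : NeZero (p^(n-i)) := ⟨pow_ne_zero _ (by omega)⟩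
  haveI : NeZero (p^n) := ⟨pow_ne_zero _ (by omega)⟩
  have hpi : 0 < p^i := Nat.pow_pos (by omega)
  have hlt : p^i * x.val < p^n := by
    have h1 : x.val < p^(n-i) := ZMod.val_lt x
    calc p^i * x.val < p^i * p^(n-i) := by
          exact Nat.mul_lt_mul_of_le_of_lt (le_refl _) h1 hpi
      _ = p^n := by rw [← pow_add]; congr 1; omega
  have h2 : (p:ZMod (p^n))^i * (x.val : ZMod (p^n)) = ((p^i * x.val : ℕ) : ZMod (p^n)) := by
    push_cast; ring
  rw [h2, ZMod.val_cast_of_lt hlt]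

lemma lift2 {p n : ℕ} (hp : 1 < p) {i : ℕ} (hin : i ≤ n) (x : ZMod (p^(n-i))) :
    (p:ZMod (p^n))^i * (((2*x : ZMod (p^(n-i))).val : ℕ) : ZMod (p^n))
      = 2 * ((p:ZMod (p^n))^i * (x.val : ZMod (p^n))) := by
  haveI : NeZero (p^(n-i)) := ⟨pow_ne_zero _ (by omega)⟩
  have hxx : ((x.val : ℕ) : ZMod (p^(n-i))) = x := ZMod.natCast_rightInverse x
  have h2x : (2*x : ZMod (p^(n-i))) = ((2 * x.val : ℕ) : ZMod (p^(n-i))) := by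
    push_cast
    rw [hxx]
  rw [h2x, castdown hin]
  push_cast
  ring

lemma liftneg {p n : ℕ} (hp : 1 < p) {i : ℕ} (hin : i ≤ n) (x : ZMod (p^(n-i))) :
    (p:ZMod (p^n))^i * (((-x : ZMod (p^(n-i))).val : ℕ) : ZMod (p^n))
      = - ((p:ZMod (p^n))^i * (x.val : ZMod (p^n))) := by
  haveI : NeZero (p^(n-i)) := ⟨pow_ne_zero _ (by omega)⟩
  have hxx : ((x.val : ℕ) : ZMod (p^(n-i))) = x := ZMod.natCast_rightInverse x
  have hvle : x.val ≤ p^(n-i) := (ZMod.val_lt x).le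
  have hnx : (-x : ZMod (p^(n-i))) = ((p^(n-i) - x.val : ℕ) : ZMod (p^(n-i))) := by
    rw [Nat.cast_sub hvle, hxx, ZMod.natCast_self]
    ring
  rw [hnx, castdown hin]
  have hexp : p^i * (p^(n-i) - x.val) = p^n - p^i * x.val := by
    rw [Nat.mul_sub, ← pow_add, Nat.add_sub_cancel' hin]
  have hle2 : p^i * x.val ≤ p^n := by
    calc p^i * x.val ≤ p^i * p^(n-i) := Nat.mul_le_mul_left _ hvle
      _ = p^n := by rw [← pow_add]; congr 1; omega
  rw [hexp, Nat.cast_sub hle2]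
  have hzero : ((p^n : ℕ) : ZMod (p^n)) = 0 := ZMod.natCast_self _
  rw [hzero]
  push_cast
  ring

lemma dvd_of_pow_shift {p : ℕ} (hp : p.Prime) {i i' a b : ℕ} (hii : i < i')
    (hv : p^i * a = p^i' * b) : p ∣ a := by
  have hpi : 0 < p^i := Nat.pow_pos hp.pos
  have h1 : p^i' = p^i * (p * p^(i'-i-1)) := by
    rw [← pow_succ']
    rw [← pow_add]
    congr 1
    omega
  rw [h1, mul_assoc] at hv
  have := Nat.eq_of_mul_eq_mul_left hpi hv
  exact ⟨p^(i'-i-1) * b, by rw [this]; ring⟩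

lemma unit_val_not_dvd {p m : ℕ} (hp : p.Prime) (hm : p ∣ m) {x : ZMod m}
    (hx : IsUnit x) : ¬ p ∣ x.val := by
  intro hdvd
  obtain ⟨u, rfl⟩ := hx
  have hcop := ZMod.val_coe_unit_coprime u
  have h1 : p ∣ Nat.gcd ((u : ZMod m)).val m := Nat.dvd_gcd hdvd hm
  rw [hcop] at h1
  have := Nat.eq_one_of_dvd_one h1
  exact hp.one_lt.ne' this

lemma liftInj {p : ℕ} (hp : p.Prime) {n i i' : ℕ} (hin : i < n) (hin' : i' < n)
    {x : ZMod (p^(n-i))} {x' : ZMod (p^(n-i'))} (hx : IsUnit x) (hx' : IsUnit x')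
    (h : (p:ZMod (p^n))^i * (x.val : ZMod (p^n)) = (p:ZMod (p^n))^i' * (x'.val : ZMod (p^n))) :
    i = i' ∧ x.val = x'.val := by
  have hv := congrArg ZMod.val h
  rw [liftval hp.one_lt hin, liftval hp.one_lt hin'] at hv
  have hnd : ¬ p ∣ x.val := unit_val_not_dvd hp (dvd_pow_self p (by omega : n - i ≠ 0)) hx
  have hnd' : ¬ p ∣ x'.val := unit_val_not_dvd hp (dvd_pow_self p (by omega : n - i' ≠ 0)) hx'
  have hii : i = i' := by
    rcases lt_trichotomy i i' with h1 | h1 | h1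
    · exact absurd (dvd_of_pow_shift hp h1 hv) hnd
    · exact h1
    · exact absurd (dvd_of_pow_shift hp h1 hv.symm) hnd'
  subst hii
  exact ⟨rfl, Nat.eq_of_mul_eq_mul_left (Nat.pow_pos hp.pos) hv⟩

lemma cover {p : ℕ} (hp : p.Prime) {n : ℕ} (hn : 0 < n) (z : ZMod (p^n)) (hz : z ≠ 0) :
    ∃ i < n, ∃ w : ℕ, ¬ p ∣ w ∧ w < p^(n-i) ∧ z.val = p^i * w := by
  haveI : NeZero (p^n) := ⟨pow_ne_zero _ hp.ne_zero⟩
  have hv0 : z.val ≠ 0 := fun h => hz (by rwa [← ZMod.val_eq_zero])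
  have hvlt : z.val < p^n := ZMod.val_lt z
  have hfin : FiniteMultiplicity p z.val :=
    Nat.finiteMultiplicity_iff.mpr ⟨hp.ne_one, Nat.pos_of_ne_zero hv0⟩
  set i := multiplicity p z.val with hi
  have hdvd : p^i ∣ z.val := pow_multiplicity_dvd p z.val
  have hnd : ¬ p^(i+1) ∣ z.val := hfin.not_pow_dvd_of_multiplicity_lt (by omega)
  obtain ⟨w, hw⟩ := hdvd
  have hpw : ¬ p ∣ w := by
    rintro ⟨w', hw'⟩
    exact hnd ⟨w', by rw [hw, hw', pow_succ]; ring⟩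
  have hiln : i < n := by
    have h1 : p^i ≤ z.val := Nat.le_of_dvd (Nat.pos_of_ne_zero hv0) ⟨w, hw⟩
    have h2 := lt_of_le_of_lt h1 hvlt
    exact (Nat.pow_lt_pow_iff_right hp.one_lt).mp h2
  have hwlt : w < p^(n-i) := by
    have h3 : p^i * w < p^i * p^(n-i) := by
      rw [← pow_add, Nat.add_sub_cancel' hiln.le, ← hw]
      exact hvlt
    exact lt_of_mul_lt_mul_left h3 (Nat.zero_le _)
  exact ⟨i, hiln, w, hpw, hwlt, hw⟩

/-- Theorem 3.3: let `p = 2^k·t + 1` be prime with `k ≥ 3`, `t > 1` odd, `r` a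
primitive root mod `p` with `r^{p-1} ≢ 1 (mod p²)`, and `2 ∈ C_{2^{k-1}}^p`. For `n > 1`,
the union over `i = 0, …, n-1` of the sets
`p^i·T_{p^{n-i}} = {{p^i·x, 2·p^i·x} : x ∈ r^j·⟨r^{2^k}⟩_{p^{n-i}}, j = 0, …, 2^{k-1}-1}`
(with `x` represented by its least positive residue) is a strong Skolem starter for `ℤ_{p^n}`. -/
theorem strong_skolem_starter_prime_power_cyclotomic (p k t n : ℕ) (hk : 3 ≤ k)
    (ht : Odd t) (ht1 : 1 < t) (hp : p.Prime) (hpeq : p = 2 ^ k * t + 1) (hn : 1 < n)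
    (r : ℤ) (hr : IsPrimitiveRoot (r : ZMod p) (p - 1))
    (hr2 : (r : ZMod (p ^ 2)) ^ (p - 1) ≠ 1)
    (h2 : (2 : ZMod p) ∈ cycClass p r (2 ^ k) (2 ^ (k - 1))) :
    IsStrongSkolemStarter (p ^ n)
      {z | ∃ i < n, ∃ x : ZMod (p ^ (n - i)),
        (∃ j < 2 ^ (k - 1), x ∈ cycClass (p ^ (n - i)) r (2 ^ k) j) ∧
        z = s((p : ZMod (p ^ n)) ^ i * (x.val : ZMod (p ^ n)),
              2 * ((p : ZMod (p ^ n)) ^ i * (x.val : ZMod (p ^ n))))} := by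
  haveI : Fact p.Prime := ⟨hp⟩
  haveI : NeZero (p^n) := ⟨pow_ne_zero _ hp.ne_zero⟩
  have h2k8 : 8 ≤ 2^k := by
    calc (8:ℕ) = 2^3 := by norm_num
      _ ≤ 2^k := Nat.pow_le_pow_right (by norm_num) hk
  have ht3 : 3 ≤ t := by rcases ht with ⟨j, hj⟩; omega
  have hplarge : 25 ≤ p := by
    have : 8*3 ≤ 2^k * t := Nat.mul_le_mul h2k8 ht3
    omega
  have hNlarge : 25 ≤ p^n := le_trans hplarge (Nat.le_self_pow (by omega) p)
  have LF := fun (i:ℕ) (hi : i < n) =>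
    levelFacts hk ht ht1 hp hpeq hr hr2 h2 (n-i) (by omega)
  -- X ≠ 0 helper
  have hXne : ∀ i, i < n → ∀ x : ZMod (p^(n-i)), IsUnit x →
      (p:ZMod (p^n))^i * (x.val : ZMod (p^n)) ≠ 0 := by
    intro i hi x hxu heq
    have hvX := liftval hp.one_lt hi x
    rw [heq, ZMod.val_zero] at hvX
    have hnd : ¬ p ∣ x.val := unit_val_not_dvd hp (dvd_pow_self p (by omega : n - i ≠ 0)) hxu
    have hpi : 0 < p^i := Nat.pow_pos hp.pos
    have hx0 : x.val = 0 := by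
      rcases Nat.mul_eq_zero.mp hvX.symm with h | h
      · omega
      · exact h
    exact hnd (hx0 ▸ dvd_zero p)
  -- decomposition helper
  have hdecomp : ∀ a : ZMod (p^n), a ≠ 0 → ∃ i, ∃ hi : i < n, ∃ u : ZMod (p^(n-i)),
      IsUnit u ∧ a = (p:ZMod (p^n))^i * (u.val : ZMod (p^n)) := by
    intro a ha
    obtain ⟨i, hi, w, hpw, hwlt, hval⟩ := cover hp (by omega) a ha
    haveI : NeZero (p^(n-i)) := ⟨pow_ne_zero _ hp.ne_zero⟩
    refine ⟨i, hi, (w : ZMod (p^(n-i))), ?_, ?_⟩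
    · have hcop : Nat.Coprime w (p^(n-i)) :=
        Nat.Coprime.pow_right _ ((hp.coprime_iff_not_dvd).mpr hpw).symm
      exact (ZMod.isUnit_iff_coprime w (p^(n-i))).mpr hcop
    · have huval : ((w : ZMod (p^(n-i)))).val = w := ZMod.val_cast_of_lt hwlt
      have ha2 : a = ((a.val : ℕ) : ZMod (p^n)) := (ZMod.natCast_rightInverse a).symm
      rw [huval, ha2, hval]
      push_cast
      ring
  have hstarter : IsStarter (p^n) {z | ∃ i < n, ∃ x : ZMod (p ^ (n - i)),
        (∃ j < 2 ^ (k - 1), x ∈ cycClass (p ^ (n - i)) r (2 ^ k) j) ∧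
        z = s((p : ZMod (p ^ n)) ^ i * (x.val : ZMod (p ^ n)),
              2 * ((p : ZMod (p ^ n)) ^ i * (x.val : ZMod (p ^ n))))} := by
    refine ⟨?_, ?_, ?_, ?_⟩
    · -- not diagonal
      rintro z ⟨i, hi, x, hxR, rfl⟩
      have hxu : IsUnit x := (LF i hi).1 x hxR
      rw [Sym2.mk_isDiag_iff]
      intro heq
      have hX0 : (p:ZMod (p^n))^i * (x.val : ZMod (p^n)) = 0 := by linear_combination -heq
      exact hXne i hi x hxu hX0
    · -- 0 not in pairs
      rintro z ⟨i, hi, x, hxR, rfl⟩ hmem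
      have hxu : IsUnit x := (LF i hi).1 x hxR
      rw [Sym2.mem_iff] at hmem
      rcases hmem with h | h
      · exact hXne i hi x hxu h.symm
      · have h2l := lift2 hp.one_lt hi.le x
        have hxu2 : IsUnit (2 * x) := ((LF i hi).2.1).mul hxu
        exact hXne i hi (2*x) hxu2 (by rw [h2l, ← h])
    · -- every nonzero element in exactly one pair
      intro a ha
      obtain ⟨i, hi, u, huu, hau⟩ := hdecomp a ha
      have hflip2 := (LF i hi).2.2.1
      have hu2 : IsUnit (2 : ZMod (p^(n-i))) := (LF i hi).2.1
      by_cases hur : u ∈ RRset (p^(n-i)) r k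
      · refine ⟨s((p:ZMod (p^n))^i * (u.val : ZMod (p^n)),
            2 * ((p:ZMod (p^n))^i * (u.val : ZMod (p^n)))), ⟨⟨i, hi, u, hur, rfl⟩, ?_⟩, ?_⟩
        · rw [hau]
          exact Sym2.mem_mk_left _ _
        · rintro z' ⟨⟨i', hi', x', hxR', rfl⟩, hmem⟩
          have hx'u : IsUnit x' := (LF i' hi').1 x' hxR'
          rw [Sym2.mem_iff] at hmem
          rcases hmem with h | h
          · obtain ⟨hii, hvv⟩ := liftInj hp hi' hi hx'u huu (h.symm.trans hau)
            subst hii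
            rw [hvv]
          · rw [← lift2 hp.one_lt hi'.le x'] at h
            have hxu2' : IsUnit (2*x') := ((LF i' hi').2.1).mul hx'u
            obtain ⟨hii, hvv⟩ := liftInj hp hi' hi hxu2' huu (h.symm.trans hau)
            subst hii
            have h2xu : 2*x' = u := ZMod.val_injective _ hvv
            have hnR := (hflip2 x' hx'u).mp hxR'
            rw [h2xu] at hnR
            exact absurd hur hnR
      · -- u not in R: use y with 2y = u
        set y : ZMod (p^(n-i)) := ((hu2.unit⁻¹ * huu.unit : (ZMod (p^(n-i)))ˣ) : ZMod (p^(n-i))) with hy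
        have hyu : IsUnit y := Units.isUnit _
        have h2y : 2 * y = u := by
          have hmu : hu2.unit * (hu2.unit⁻¹ * huu.unit) = huu.unit := by
            rw [← mul_assoc, mul_inv_cancel, one_mul]
          calc 2 * y = ((hu2.unit * (hu2.unit⁻¹ * huu.unit) : (ZMod (p^(n-i)))ˣ) : ZMod (p^(n-i))) := by
                rw [Units.val_mul, hu2.unit_spec]
            _ = u := by rw [hmu, huu.unit_spec]
        have hyR : y ∈ RRset (p^(n-i)) r k := by
          have hf := hflip2 y hyu
          rw [h2y] at hf
          exact hf.mpr hur
        have hay : a = 2 * ((p:ZMod (p^n))^i * (y.val : ZMod (p^n))) := by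
          rw [← lift2 hp.one_lt hi.le y, h2y, hau]
        refine ⟨s((p:ZMod (p^n))^i * (y.val : ZMod (p^n)),
            2 * ((p:ZMod (p^n))^i * (y.val : ZMod (p^n)))), ⟨⟨i, hi, y, hyR, rfl⟩, ?_⟩, ?_⟩
        · rw [hay]
          exact Sym2.mem_mk_right _ _
        · rintro z' ⟨⟨i', hi', x', hxR', rfl⟩, hmem⟩
          have hx'u : IsUnit x' := (LF i' hi').1 x' hxR'
          rw [Sym2.mem_iff] at hmem
          rcases hmem with h | h
          · obtain ⟨hii, hvv⟩ := liftInj hp hi' hi hx'u huu (h.symm.trans hau)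
            subst hii
            have hxu' : x' = u := ZMod.val_injective _ hvv
            rw [hxu'] at hxR'
            exact absurd hxR' hur
          · rw [← lift2 hp.one_lt hi'.le x'] at h
            have hxu2' : IsUnit (2*x') := ((LF i' hi').2.1).mul hx'u
            obtain ⟨hii, hvv⟩ := liftInj hp hi' hi hxu2' huu (h.symm.trans hau)
            subst hii
            have h2xu : 2*x' = 2*y := by
              rw [ZMod.val_injective _ hvv, ← h2y]
            have hxy : x' = y := hu2.mul_left_cancel h2xu
            rw [hxy]
    · -- every nonzero difference from exactly one pair
      intro a ha
      obtain ⟨i, hi, u, huu, hau⟩ := hdecomp a ha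
      have hflipn := (LF i hi).2.2.2
      -- helper: differences of a pair
      have hdiff : ∀ i', i' < n → ∀ x' : ZMod (p^(n-i')),
          (∃ x0 y0 : ZMod (p^n), s((p:ZMod (p^n))^i' * (x'.val : ZMod (p^n)),
              2 * ((p:ZMod (p^n))^i' * (x'.val : ZMod (p^n)))) = s(x0, y0) ∧ x0 - y0 = a) →
          (a = (p:ZMod (p^n))^i' * (x'.val : ZMod (p^n)) ∨
           a = (p:ZMod (p^n))^i' * (((-x' : ZMod (p^(n-i'))).val : ℕ) : ZMod (p^n))) := by
        intro i' hi' x' ⟨x0, y0, hz, hd⟩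
        rw [Sym2.eq_iff] at hz
        rw [liftneg hp.one_lt hi'.le x']
        rcases hz with ⟨rfl, rfl⟩ | ⟨rfl, rfl⟩
        · right
          linear_combination -hd
        · left
          linear_combination -hd
      by_cases hur : u ∈ RRset (p^(n-i)) r k
      · refine ⟨s((p:ZMod (p^n))^i * (u.val : ZMod (p^n)),
            2 * ((p:ZMod (p^n))^i * (u.val : ZMod (p^n)))), ⟨⟨i, hi, u, hur, rfl⟩,
            2 * ((p:ZMod (p^n))^i * (u.val : ZMod (p^n))),
            (p:ZMod (p^n))^i * (u.val : ZMod (p^n)), Sym2.eq_swap, by rw [hau]; ring⟩, ?_⟩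
        rintro z' ⟨⟨i', hi', x', hxR', rfl⟩, hQ⟩
        have hx'u : IsUnit x' := (LF i' hi').1 x' hxR'
        rcases hdiff i' hi' x' hQ with h | h
        · obtain ⟨hii, hvv⟩ := liftInj hp hi' hi hx'u huu (h.symm.trans hau)
          subst hii
          rw [hvv]
        · obtain ⟨hii, hvv⟩ := liftInj hp hi' hi hx'u.neg huu (h.symm.trans hau)
          subst hii
          have hnxu : -x' = u := ZMod.val_injective _ hvv
          have hnR := (hflipn x' hx'u).mp hxR'
          rw [hnxu] at hnR
          exact absurd hur hnR
      · have hmu : (-u : ZMod (p^(n-i))) ∈ RRset (p^(n-i)) r k := by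
          have hf := hflipn (-u) huu.neg
          rw [neg_neg] at hf
          exact hf.mpr hur
        have hanu : a = - ((p:ZMod (p^n))^i * (((-u : ZMod (p^(n-i))).val : ℕ) : ZMod (p^n))) := by
          rw [liftneg hp.one_lt hi.le u, hau]
          ring
        refine ⟨s((p:ZMod (p^n))^i * (((-u : ZMod (p^(n-i))).val : ℕ) : ZMod (p^n)),
            2 * ((p:ZMod (p^n))^i * (((-u : ZMod (p^(n-i))).val : ℕ) : ZMod (p^n)))),
            ⟨⟨i, hi, -u, hmu, rfl⟩,
            (p:ZMod (p^n))^i * (((-u : ZMod (p^(n-i))).val : ℕ) : ZMod (p^n)),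
            2 * ((p:ZMod (p^n))^i * (((-u : ZMod (p^(n-i))).val : ℕ) : ZMod (p^n))),
            rfl, by rw [hanu]; ring⟩, ?_⟩
        rintro z' ⟨⟨i', hi', x', hxR', rfl⟩, hQ⟩
        have hx'u : IsUnit x' := (LF i' hi').1 x' hxR'
        rcases hdiff i' hi' x' hQ with h | h
        · obtain ⟨hii, hvv⟩ := liftInj hp hi' hi hx'u huu (h.symm.trans hau)
          subst hii
          have hxu' : x' = u := ZMod.val_injective _ hvv
          rw [hxu'] at hxR'
          exact absurd hxR' hur
        · obtain ⟨hii, hvv⟩ := liftInj hp hi' hi hx'u.neg huu (h.symm.trans hau)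
          subst hii
          have hnxu : x' = -u := by
            have := ZMod.val_injective _ hvv
            rw [← this, neg_neg]
          rw [hnxu]
  have hps : ∀ a b : ZMod (p^n), pairSum s(a, b) = a + b := fun a b => rfl
  have h3 : IsUnit (3 : ZMod (p^n)) := by
    have hcop : Nat.Coprime 3 (p^n) :=
      Nat.Coprime.pow_right _ ((Nat.coprime_primes (by norm_num) hp).mpr (by omega))
    have := (ZMod.isUnit_iff_coprime 3 (p^n)).mpr hcop
    simpa using this
  refine ⟨⟨hstarter, ?_, ?_⟩, hstarter, ?_⟩
  · -- sums nonzero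
    rintro z ⟨i, hi, x, hxR, rfl⟩
    have hxu : IsUnit x := (LF i hi).1 x hxR
    rw [hps]
    intro h0
    have h30 : (3 : ZMod (p^n)) * ((p:ZMod (p^n))^i * (x.val : ZMod (p^n))) = 0 := by
      linear_combination h0
    rw [h3.mul_right_eq_zero] at h30
    exact hXne i hi x hxu h30
  · -- sums distinct
    rintro z ⟨i, hi, x, hxR, rfl⟩ w ⟨i', hi', x', hxR', rfl⟩ hsum
    rw [hps, hps] at hsum
    have hxu : IsUnit x := (LF i hi).1 x hxR
    have hx'u : IsUnit x' := (LF i' hi').1 x' hxR'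
    have h3s : (3 : ZMod (p^n)) * ((p:ZMod (p^n))^i * (x.val : ZMod (p^n)))
        = 3 * ((p:ZMod (p^n))^i' * (x'.val : ZMod (p^n))) := by
      linear_combination hsum
    have heq := h3.mul_left_cancel h3s
    obtain ⟨hii, hvv⟩ := liftInj hp hi hi' hxu hx'u heq
    subst hii
    rw [hvv]
  · -- skolem
    intro d hd1 hd2
    have hdN : 2*d ≤ p^n - 1 := by omega
    have hdlt : d < p^n := by omega
    have haval : ((d:ℕ) : ZMod (p^n)).val = d := ZMod.val_cast_of_lt hdlt
    have ha0 : ((d:ℕ) : ZMod (p^n)) ≠ 0 := by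
      intro h
      rw [h, ZMod.val_zero] at haval
      omega
    obtain ⟨i, hi, u, huu, hau⟩ := hdecomp ((d:ℕ) : ZMod (p^n)) ha0
    have hflipn := (LF i hi).2.2.2
    by_cases hur : u ∈ RRset (p^(n-i)) r k
    · refine ⟨s((p:ZMod (p^n))^i * (u.val : ZMod (p^n)),
          2 * ((p:ZMod (p^n))^i * (u.val : ZMod (p^n)))), ⟨i, hi, u, hur, rfl⟩,
          (p:ZMod (p^n))^i * (u.val : ZMod (p^n)),
          2 * ((p:ZMod (p^n))^i * (u.val : ZMod (p^n))), rfl, ?_, ?_⟩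
      · -- vals : d < 2d
        have hv1 : ((p:ZMod (p^n))^i * (u.val : ZMod (p^n))).val = d := by
          rw [← hau, haval]
        have hv2 : (2 * ((p:ZMod (p^n))^i * (u.val : ZMod (p^n)))).val = 2*d := by
          have : 2 * ((p:ZMod (p^n))^i * (u.val : ZMod (p^n))) = ((2*d : ℕ) : ZMod (p^n)) := by
            rw [← hau]
            push_cast
            ring
          rw [this, ZMod.val_cast_of_lt (by omega)]
        rw [hv1, hv2]
        omega
      · linear_combination -hau
    · have hmu : (-u : ZMod (p^(n-i))) ∈ RRset (p^(n-i)) r k := by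
        have hf := hflipn (-u) huu.neg
        rw [neg_neg] at hf
        exact hf.mpr hur
      have hanu : (p:ZMod (p^n))^i * (((-u : ZMod (p^(n-i))).val : ℕ) : ZMod (p^n))
          = - ((d:ℕ) : ZMod (p^n)) := by
        rw [liftneg hp.one_lt hi.le u, hau]
      refine ⟨s((p:ZMod (p^n))^i * (((-u : ZMod (p^(n-i))).val : ℕ) : ZMod (p^n)),
          2 * ((p:ZMod (p^n))^i * (((-u : ZMod (p^(n-i))).val : ℕ) : ZMod (p^n)))),
          ⟨i, hi, -u, hmu, rfl⟩,
          2 * ((p:ZMod (p^n))^i * (((-u : ZMod (p^(n-i))).val : ℕ) : ZMod (p^n))),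
          (p:ZMod (p^n))^i * (((-u : ZMod (p^(n-i))).val : ℕ) : ZMod (p^n)),
          Sym2.eq_swap, ?_, ?_⟩
      · have hv1 : ((p:ZMod (p^n))^i * (((-u : ZMod (p^(n-i))).val : ℕ) : ZMod (p^n))).val
            = p^n - d := by
          have h1 : (p:ZMod (p^n))^i * (((-u : ZMod (p^(n-i))).val : ℕ) : ZMod (p^n))
              = ((p^n - d : ℕ) : ZMod (p^n)) := by
            rw [hanu, Nat.cast_sub hdlt.le, ZMod.natCast_self]
            ring
          rw [h1, ZMod.val_cast_of_lt (by omega)]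
        have hv2 : (2 * ((p:ZMod (p^n))^i * (((-u : ZMod (p^(n-i))).val : ℕ) : ZMod (p^n)))).val
            = p^n - 2*d := by
          have h1 : 2 * ((p:ZMod (p^n))^i * (((-u : ZMod (p^(n-i))).val : ℕ) : ZMod (p^n)))
              = ((p^n - 2*d : ℕ) : ZMod (p^n)) := by
            rw [hanu, Nat.cast_sub (by omega), ZMod.natCast_self]
            push_cast
            ring
          rw [h1, ZMod.val_cast_of_lt (by omega)]
        rw [hv1, hv2]
        omega
      · linear_combination -hanu
end

section
/- Let t₁ and t₂ be odd integers greater than 1 with t₁ < t₂, let k ≥ 3 be an integer, and suppose p = 2^k·t₁ + 1 and q = 2^k·t₂ + 1 are both prime. If r is an integer coprime to pq that is a non-quadratic residue modulo p and a non-quadratic residue modulo q, then r^{(p−1)(q−1)/2^{k+1}} ≡ −1 (mod pq). Moreover, if r is a primitive root modulo p and a primitive root modulo q, then −1 ∈ r^{2^{k−1}}·⟨r^{2^k}⟩_{pq} in the unit group G_{pq}. -/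
/-- Lemma 4.1: let `p = 2^k·t₁ + 1` and `q = 2^k·t₂ + 1` be primes with `k ≥ 3` and
`1 < t₁ < t₂` odd. If `r` is coprime to `pq` and is a non-quadratic residue mod `p` and
mod `q`, then `r^{(p-1)(q-1)/2^{k+1}} ≡ -1 (mod pq)`. Moreover, if `r` is a primitive
root mod `p` and mod `q`, then `-1 ∈ r^{2^{k-1}}·⟨r^{2^k}⟩_{pq}`. -/
theorem neg_one_pow_mod_pq (t₁ t₂ k p q : ℕ) (ht₁ : Odd t₁) (ht₂ : Odd t₂)
    (h1 : 1 < t₁) (h12 : t₁ < t₂) (hk : 3 ≤ k)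
    (hpeq : p = 2 ^ k * t₁ + 1) (hqeq : q = 2 ^ k * t₂ + 1)
    (hp : p.Prime) (hq : q.Prime) (r : ℤ) (hcop : IsCoprime r ((p * q : ℕ) : ℤ))
    (hnp : ¬ IsSquare (r : ZMod p)) (hnq : ¬ IsSquare (r : ZMod q)) :
    (r : ZMod (p * q)) ^ ((p - 1) * (q - 1) / 2 ^ (k + 1)) = -1 ∧
    (IsPrimitiveRoot (r : ZMod p) (p - 1) → IsPrimitiveRoot (r : ZMod q) (q - 1) →
      (-1 : ZMod (p * q)) ∈ cycClass (p * q) r (2 ^ k) (2 ^ (k - 1))) := by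
  haveI := Fact.mk hp
  haveI := Fact.mk hq
  obtain ⟨m, rfl⟩ : ∃ m, k = m + 1 := ⟨k - 1, by omega⟩
  set N : ℕ := 2 ^ m * (t₁ * t₂) with hN
  -- coprimality of r with p and q
  have hcp : IsCoprime r (p : ℤ) := by
    have : ((p * q : ℕ) : ℤ) = (p : ℤ) * q := by push_cast; ring
    rw [this] at hcop
    exact hcop.of_mul_right_left
  have hcq : IsCoprime r (q : ℤ) := by
    have : ((p * q : ℕ) : ℤ) = (p : ℤ) * q := by push_cast; ring
    rw [this] at hcop
    exact hcop.of_mul_right_right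
  have hrp : (r : ZMod p) ≠ 0 := by
    intro h
    have hdvd : (p : ℤ) ∣ r := (ZMod.intCast_zmod_eq_zero_iff_dvd r p).mp h
    have := hcp.isUnit_of_dvd' hdvd dvd_rfl
    rw [Int.isUnit_iff] at this
    have := hp.two_le
    omega
  have hrq : (r : ZMod q) ≠ 0 := by
    intro h
    have hdvd : (q : ℤ) ∣ r := (ZMod.intCast_zmod_eq_zero_iff_dvd r q).mp h
    have := hcq.isUnit_of_dvd' hdvd dvd_rfl
    rw [Int.isUnit_iff] at this
    have := hq.two_le
    omega
  -- p/2 and q/2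
  have hp2 : p / 2 = 2 ^ m * t₁ := by
    have : p = 2 * (2 ^ m * t₁) + 1 := by rw [hpeq]; ring
    omega
  have hq2 : q / 2 = 2 ^ m * t₂ := by
    have : q = 2 * (2 ^ m * t₂) + 1 := by rw [hqeq]; ring
    omega
  -- Euler criterion
  have hep : (r : ZMod p) ^ (p / 2) = -1 := by
    rcases ZMod.pow_div_two_eq_neg_one_or_one p hrp with h | h
    · exact absurd ((ZMod.euler_criterion p hrp).mpr h) hnp
    · exact h
  have heq : (r : ZMod q) ^ (q / 2) = -1 := by
    rcases ZMod.pow_div_two_eq_neg_one_or_one q hrq with h | h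
    · exact absurd ((ZMod.euler_criterion q hrq).mpr h) hnq
    · exact h
  have hNp : (r : ZMod p) ^ N = -1 := by
    have : N = (p / 2) * t₂ := by rw [hp2, hN]; ring
    rw [this, pow_mul, hep, ht₂.neg_one_pow]
  have hNq : (r : ZMod q) ^ N = -1 := by
    have : N = (q / 2) * t₁ := by rw [hq2, hN]; ring
    rw [this, pow_mul, heq, ht₁.neg_one_pow]
  -- lift to pq via CRT (divisibility)
  have hdp : (p : ℤ) ∣ r ^ N + 1 := by
    rw [← ZMod.intCast_zmod_eq_zero_iff_dvd]
    push_cast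
    rw [hNp]; ring
  have hdq : (q : ℤ) ∣ r ^ N + 1 := by
    rw [← ZMod.intCast_zmod_eq_zero_iff_dvd]
    push_cast
    rw [hNq]; ring
  have hne : p ≠ q := by
    have : 2 ^ (m + 1) * t₁ < 2 ^ (m + 1) * t₂ := by
      have h2 : 0 < 2 ^ (m + 1) := Nat.pow_pos (by norm_num : (0:ℕ) < 2)
      exact Nat.mul_lt_mul_of_le_of_lt (le_refl _) h12 h2
    omega
  have hpqcop : IsCoprime (p : ℤ) (q : ℤ) :=
    Nat.isCoprime_iff_coprime.mpr ((Nat.coprime_primes hp hq).mpr hne)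
  have hdpq : ((p * q : ℕ) : ℤ) ∣ r ^ N + 1 := by
    push_cast
    exact hpqcop.mul_dvd hdp hdq
  have hmain : (r : ZMod (p * q)) ^ N = -1 := by
    have h0 : ((r ^ N + 1 : ℤ) : ZMod (p * q)) = 0 :=
      (ZMod.intCast_zmod_eq_zero_iff_dvd _ _).mpr hdpq
    push_cast at h0
    linear_combination h0
  constructor
  · have hexp : (p - 1) * (q - 1) / 2 ^ (m + 1 + 1) = N := by
      have hp1 : p - 1 = 2 ^ (m + 1) * t₁ := by omega
      have hq1 : q - 1 = 2 ^ (m + 1) * t₂ := by omega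
      rw [hp1, hq1, hN]
      have : 2 ^ (m + 1) * t₁ * (2 ^ (m + 1) * t₂) = 2 ^ (m + 1 + 1) * (2 ^ m * (t₁ * t₂)) := by
        ring
      rw [this, Nat.mul_div_cancel_left _ (Nat.pow_pos (by norm_num : (0:ℕ) < 2))]
    rw [hexp]; exact hmain
  · intro _ _
    obtain ⟨s, hs⟩ := ht₁.mul ht₂
    refine ⟨s, ?_⟩
    have : (r : ZMod (p * q)) ^ 2 ^ (m + 1 - 1) * ((r : ZMod (p * q)) ^ 2 ^ (m + 1)) ^ s
        = (r : ZMod (p * q)) ^ N := by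
      rw [← pow_mul, ← pow_add]
      congr 1
      rw [hN, hs]
      simp only [Nat.add_sub_cancel]
      ring
    rw [this, hmain]
end
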